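/- arXiv:1108.6228 — 7 statements merged into one kernel-verified Lean document; each statement's English description precedes it below -/
import Mathlib

section
/- Let N be a natural number, ν ∈ (0,1), μ = 1 − ν, and for a function h : {0,…,N} → ℝ define the Ehrenfest generator by (Q h)(x) = μ·x·(h(x−1) − h(x)) + ν·(N−x)·(h(x+1) − h(x)). Then for every β ∈ ℝ, the function h^β(x,t) = (1 − β·μ·e^t)^x · (1 + β·ν·e^t)^{N−x} is space-time harmonic for Q, i.e. for every integer 0 ≤ x ≤ N and every t ∈ ℝ, (∂/∂t) h^β(x,t) + μ·x·(h^β(x−1,t) − h^β(x,t)) + ν·(N−x)·(h^β(x+1,t) − h^β(x,t)) = 0. -/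
/-!
Write `a = 1 - βμeᵗ` and `b = 1 + βνeᵗ`, so that `h^β(x, t) = aˣ b^{N-x}`. Then `∂ₜa = a - 1 = -βμeᵗ`,
`∂ₜb = b - 1 = βνeᵗ` and `b - a = (μ + ν)βeᵗ = βeᵗ`. Both the time derivative and the generator
split into a term proportional to `x a^{x-1} b^{N-x}` and one proportional to
`(N - x) aˣ b^{N-x-1}`, and with these three identities each of the two coefficients vanishes.
-/

/-- At `x = 0` the truncated `x - 1` is harmless: its coefficient `μx` vanishes. -/
def ehrenfestGenerator (N : ℕ) (μ ν : ℝ) (f : ℕ → ℝ) (x : ℕ) : ℝ :=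
  μ * x * (f (x - 1) - f x) + ν * ((N : ℝ) - x) * (f (x + 1) - f x)

theorem ehrenfestGenerator_pow_mul_pow {N x : ℕ} (hx : x ≤ N) (μ ν a b : ℝ) :
    ehrenfestGenerator N μ ν (fun y => a ^ y * b ^ (N - y)) x =
      μ * x * a ^ (x - 1) * b ^ (N - x) * (b - a)
        + ν * ((N : ℝ) - x) * a ^ x * b ^ (N - x - 1) * (a - b) := by
  obtain ⟨m, rfl⟩ : ∃ m, N = x + m := ⟨N - x, by omega⟩
  unfold ehrenfestGenerator
  rcases x with _ | x <;> rcases m with _ | m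
  · simp
  · simp only [CharP.cast_eq_zero, zero_add, tsub_zero, Nat.add_sub_cancel, pow_succ]
    push_cast; ring
  · have h₁ : x + 1 + 0 - x = 1 := by omega
    have h₂ : x + 1 + 0 - (x + 1 + 1) = 0 := by omega
    simp only [add_zero, tsub_self, Nat.add_sub_cancel, h₁, h₂]
    ring
  · have h₁ : x + 1 + (m + 1) - x = m + 2 := by omega
    have h₂ : x + 1 + (m + 1) - (x + 1 + 1) = m := by omega
    simp only [Nat.add_sub_cancel, Nat.add_sub_cancel_left, h₁, h₂]
    push_cast
    ring

theorem hasDerivAt_one_add_mul_exp (c t : ℝ) :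
    HasDerivAt (fun s => 1 + c * Real.exp s) (c * Real.exp t) t := by
  simpa using ((Real.hasDerivAt_exp t).const_mul c).const_add 1

theorem ehrenfest_exponential_harmonic_general
    (N : ℕ) (ν μ : ℝ) (hμ : μ = 1 - ν)
    (β : ℝ) (h : ℕ → ℝ → ℝ)
    (hdef : ∀ (x : ℕ) (t : ℝ),
      h x t = (1 - β * μ * Real.exp t) ^ x * (1 + β * ν * Real.exp t) ^ (N - x)) :
    ∀ (x : ℕ), x ≤ N → ∀ t : ℝ,
      deriv (h x) t
        + μ * x * (h (x - 1) t - h x t)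
        + ν * ((N : ℝ) - x) * (h (x + 1) t - h x t) = 0 := by
  intro x hx t
  set a := fun s => 1 + -(β * μ) * Real.exp s
  set b := fun s => 1 + β * ν * Real.exp s
  have hh : ∀ y, h y = fun s => a s ^ y * b s ^ (N - y) := fun y => by
    funext s; simp only [hdef, a, b]; ring
  have hderiv : HasDerivAt (h x) (x * a t ^ (x - 1) * (-(β * μ) * Real.exp t) * b t ^ (N - x)
      + a t ^ x * ((N - x : ℕ) * b t ^ (N - x - 1) * (β * ν * Real.exp t))) t := by
    rw [hh]
    exact ((hasDerivAt_one_add_mul_exp _ t).pow x).mul ((hasDerivAt_one_add_mul_exp _ t).pow _)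
  rw [hderiv.deriv, add_assoc]
  change _ + ehrenfestGenerator N μ ν (fun y => h y t) x = 0
  simp only [hh, ehrenfestGenerator_pow_mul_pow hx, Nat.cast_sub hx, a, b, hμ]
  ring

/-- Exponential martingale functions for the Ehrenfest process: the function
`h^β(x,t) = (1 - βμe^t)^x (1 + βνe^t)^{N-x}` is space-time harmonic for the
Ehrenfest generator with birth rate `ν(N-x)` and death rate `μx`. -/
theorem ehrenfest_exponential_harmonic
    (N : ℕ) (ν μ : ℝ) (hν : ν ∈ Set.Ioo (0:ℝ) 1) (hμ : μ = 1 - ν)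
    (β : ℝ) (h : ℕ → ℝ → ℝ)
    (hdef : ∀ (x : ℕ) (t : ℝ),
      h x t = (1 - β * μ * Real.exp t) ^ x * (1 + β * ν * Real.exp t) ^ (N - x)) :
    ∀ (x : ℕ), x ≤ N → ∀ t : ℝ,
      deriv (h x) t
        + μ * x * (h (x - 1) t - h x t)
        + ν * ((N : ℝ) - x) * (h (x + 1) t - h x t) = 0 :=
  ehrenfest_exponential_harmonic_general N ν μ hμ β h hdef
end

section
/- Let N be a natural number, C an integer with 1 ≤ C ≤ N−1, ν ∈ (0,1), μ = 1 − ν, and α > 0. Set b = ν ∫₀¹ (1−u)^{C} (1 + (ν/μ)u)^{N−C−1} u^{α} du and d = μ ∫₀¹ (1−u)^{N−C−1} (1 + (μ/ν)u)^{C} u^{α} du, and define g(x,t) = d·e^{−αt} ∫₀¹ (1−u)^x (1+(ν/μ)u)^{N−x} u^{α−1} du + b·e^{−αt} ∫₀¹ (1−u)^{N−x} (1+(μ/ν)u)^{x} u^{α−1} du for integers 0 ≤ x ≤ C and t ∈ ℝ. Then for every integer 1 ≤ x ≤ C and every t ∈ ℝ, (∂/∂t) g(x,t) + μ·x·(g(x−1,t)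 − g(x,t)) + 𝟙_{x<C}·ν·(N−x)·(g(x+1,t) − g(x,t)) = 0. -/
/-!
Write `I(x) = ∫₀¹ (1-u)^x (1+(ν/μ)u)^(N-x) u^(α-1) du` and let `J(x)` be the same integral with
`ν ↔ μ` and `x ↔ N - x`. Integrating `(1-u)^(p+1) (1+cu)^(q+1) u^α` by parts, and using
`(1 + cu) - (1 - u) = (1 + c) u` with `μ (1 + ν/μ) = 1`, shows that `I` and `J` are eigenfunctions
with eigenvalue `α` of the Engset generator without reflection. So `e^(-αt) (d I + b J)` is
space-time harmonic at every state below `C`. At `C` the birth term is missing, but `b` and `d`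
are chosen so that `d I + b J` takes the same value at `C` and `C + 1`, so that term vanishes anyway.
-/

open MeasureTheory

noncomputable def betaPolyIntegral (c β : ℝ) (p q : ℕ) : ℝ :=
  ∫ u in Set.Ioo (0:ℝ) 1, (1 - u) ^ p * (1 + c * u) ^ q * u ^ β

section

variable (c : ℝ) (p q : ℕ)

theorem integrableOn_betaPoly {β : ℝ} (hβ : -1 < β) :
    IntegrableOn (fun u : ℝ => (1 - u) ^ p * (1 + c * u) ^ q * u ^ β) (Set.Ioo 0 1) := by
  rw [← intervalIntegrable_iff_integrableOn_Ioo_of_le zero_le_one]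
  exact (intervalIntegral.intervalIntegrable_rpow' hβ).continuousOn_mul
    (by fun_prop : Continuous fun u : ℝ => (1 - u) ^ p * (1 + c * u) ^ q).continuousOn

theorem betaPolyIntegral_sub_succ {α : ℝ} (hα : 0 < α) :
    betaPolyIntegral c (α - 1) p (q + 1) - betaPolyIntegral c (α - 1) (p + 1) q
      = (1 + c) * betaPolyIntegral c α p q := by
  rw [betaPolyIntegral, betaPolyIntegral, betaPolyIntegral, ← integral_const_mul,
    ← integral_sub (integrableOn_betaPoly c p (q + 1) (by linarith))
      (integrableOn_betaPoly c (p + 1) q (by linarith))]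
  refine setIntegral_congr_fun measurableSet_Ioo fun u hu => ?_
  rw [show u ^ α = u ^ (α - 1) * u by rw [← Real.rpow_add_one hu.1.ne', sub_add_cancel]]
  ring

theorem hasDerivAt_betaPoly {α u : ℝ} (hu : 0 < u) :
    HasDerivAt (fun u : ℝ => (1 - u) ^ (p + 1) * (1 + c * u) ^ (q + 1) * u ^ α)
      (α * ((1 - u) ^ (p + 1) * (1 + c * u) ^ (q + 1) * u ^ (α - 1))
        - (p + 1) * ((1 - u) ^ p * (1 + c * u) ^ (q + 1) * u ^ α)
        + c * (q + 1) * ((1 - u) ^ (p + 1) * (1 + c * u) ^ q * u ^ α)) u := by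
  have h₁ := ((hasDerivAt_id' u).const_sub 1).fun_pow (p + 1)
  have h₂ := (((hasDerivAt_id' u).const_mul c).const_add 1).fun_pow (q + 1)
  refine ((h₁.fun_mul h₂).fun_mul
    (Real.hasDerivAt_rpow_const (p := α) (Or.inl hu.ne'))).congr_deriv ?_
  push_cast
  ring

/-- Integration by parts against `u ^ α`; the boundary term vanishes at both ends. -/
theorem mul_betaPolyIntegral_succ_succ {α : ℝ} (hα : 0 < α) :
    α * betaPolyIntegral c (α - 1) (p + 1) (q + 1)
      = (p + 1) * betaPolyIntegral c α p (q + 1)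
        - c * (q + 1) * betaPolyIntegral c α (p + 1) q := by
  have hA := (integrableOn_betaPoly c (p + 1) (q + 1) (by linarith : -1 < α - 1)).const_mul α
  have hB₁ :=
    (integrableOn_betaPoly c p (q + 1) (by linarith : -1 < α)).const_mul ((p : ℝ) + 1)
  have hB₂ := (integrableOn_betaPoly c (p + 1) q (by linarith : -1 < α)).const_mul (c * (q + 1))
  have hcont : ContinuousOn
      (fun u : ℝ => (1 - u) ^ (p + 1) * (1 + c * u) ^ (q + 1) * u ^ α) (Set.Icc 0 1) :=
    fun u _ => ((by fun_prop : Continuous fun u : ℝ => (1 - u) ^ (p + 1) * (1 + c * u) ^ (q + 1))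
      |>.continuousAt.mul (Real.continuousAt_rpow_const u α (Or.inr hα.le))).continuousWithinAt
  have hFTC := intervalIntegral.integral_eq_sub_of_hasDeriv_right_of_le zero_le_one hcont
    (fun u hu => (hasDerivAt_betaPoly c p q hu.1).hasDerivWithinAt)
    ((intervalIntegrable_iff_integrableOn_Ioo_of_le zero_le_one).2 ((hA.sub hB₁).add hB₂))
  rw [intervalIntegral.integral_of_le zero_le_one, integral_Ioc_eq_integral_Ioo,
    integral_add (f := fun u => _ - _) (hA.sub hB₁) hB₂, integral_sub hA hB₁,
    integral_const_mul, integral_const_mul, integral_const_mul] at hFTC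
  simp only [one_pow, sub_self, zero_pow (Nat.succ_ne_zero _), zero_mul,
    Real.zero_rpow hα.ne', mul_zero, sub_zero] at hFTC
  rw [betaPolyIntegral, betaPolyIntegral, betaPolyIntegral]
  linarith

theorem betaPolyIntegral_generator {α μ ν : ℝ} (hα : 0 < α) (hμc : μ * (1 + c) = 1)
    (hνc : ν = c * μ) (a b : ℕ) :
    μ * (a + 1) * (betaPolyIntegral c (α - 1) a (b + 2)
        - betaPolyIntegral c (α - 1) (a + 1) (b + 1))
      + ν * (b + 1) * (betaPolyIntegral c (α - 1) (a + 2) b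
        - betaPolyIntegral c (α - 1) (a + 1) (b + 1))
      = α * betaPolyIntegral c (α - 1) (a + 1) (b + 1) := by
  have hIBP := mul_betaPolyIntegral_succ_succ c a b hα
  have hdown := betaPolyIntegral_sub_succ c a (b + 1) hα
  have hup := betaPolyIntegral_sub_succ c (a + 1) b hα
  linear_combination μ * (a + 1) * hdown - ν * (b + 1) * hup - hIBP
    + ((a + 1) * betaPolyIntegral c α a (b + 1)
      - c * (b + 1) * betaPolyIntegral c α (a + 1) b) * hμc
    - (1 + c) * (b + 1) * betaPolyIntegral c α (a + 1) b * hνc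

theorem betaPolyIntegral_reflecting_boundary {α μ ν c' : ℝ} (hα : 0 < α)
    (hμc : μ * (1 + c) = 1) (hνc' : ν * (1 + c') = 1) (a m : ℕ) :
    μ * betaPolyIntegral c' α m (a + 1) * (betaPolyIntegral c (α - 1) (a + 2) m
        - betaPolyIntegral c (α - 1) (a + 1) (m + 1))
      + ν * betaPolyIntegral c α (a + 1) m * (betaPolyIntegral c' (α - 1) m (a + 2)
        - betaPolyIntegral c' (α - 1) (m + 1) (a + 1)) = 0 := by
  have hI := betaPolyIntegral_sub_succ c (a + 1) m hα
  have hJ := betaPolyIntegral_sub_succ c' m (a + 1) hα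
  linear_combination ν * betaPolyIntegral c α (a + 1) m * hJ
    - μ * betaPolyIntegral c' α m (a + 1) * hI
    + betaPolyIntegral c α (a + 1) m * betaPolyIntegral c' α m (a + 1) * (hνc' - hμc)

end

theorem deriv_eq_neg_mul_of_eq_exp_mul {f : ℝ → ℝ} {α : ℝ}
    (hf : ∀ s, f s = Real.exp (-α * s) * f 0) (t : ℝ) : deriv f t = -α * f t := by
  rw [funext hf]
  exact (((hasDerivAt_id' t).const_mul (-α)).exp.mul_const _).deriv.trans (by beta_reduce; ring)

theorem engset_Kalpha_harmonic_general
    (N C : ℕ) (hCN : C + 1 ≤ N)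
    (ν μ : ℝ) (hν : ν ∈ Set.Ioo (0:ℝ) 1) (hμ : μ = 1 - ν)
    (α : ℝ) (hα : 0 < α) (b d : ℝ)
    (hb : b = ν * ∫ u in Set.Ioo (0:ℝ) 1,
        (1 - u) ^ C * (1 + (ν / μ) * u) ^ (N - C - 1) * u ^ α)
    (hd : d = μ * ∫ u in Set.Ioo (0:ℝ) 1,
        (1 - u) ^ (N - C - 1) * (1 + (μ / ν) * u) ^ C * u ^ α)
    (g : ℕ → ℝ → ℝ)
    (hg : ∀ (x : ℕ) (t : ℝ),
      g x t = d * (Real.exp (-α * t) *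
          ∫ u in Set.Ioo (0:ℝ) 1,
            (1 - u) ^ x * (1 + (ν / μ) * u) ^ (N - x) * u ^ (α - 1))
        + b * (Real.exp (-α * t) *
          ∫ u in Set.Ioo (0:ℝ) 1,
            (1 - u) ^ (N - x) * (1 + (μ / ν) * u) ^ x * u ^ (α - 1))) :
    ∀ (x : ℕ), 1 ≤ x → x ≤ C → ∀ t : ℝ,
      deriv (g x) t
        + μ * x * (g (x - 1) t - g x t)
        + (if x < C then (1:ℝ) else 0) * (ν * ((N : ℝ) - x) * (g (x + 1) t - g x t))
        = 0 := by
  obtain ⟨hν0, hν1⟩ := hν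
  have hμ0 : μ ≠ 0 := by rw [hμ]; linarith
  have hc : μ * (1 + ν / μ) = 1 := by field_simp; linarith
  have hc' : ν * (1 + μ / ν) = 1 := by field_simp; linarith
  intro x hx1 hxC t
  obtain ⟨a, rfl⟩ : ∃ a, x = a + 1 := ⟨x - 1, by omega⟩
  obtain ⟨m, rfl⟩ : ∃ m, N = a + m + 2 := ⟨N - a - 2, by omega⟩
  rw [deriv_eq_neg_mul_of_eq_exp_mul
    (fun s => by rw [hg, hg (a + 1) 0, mul_zero, Real.exp_zero]; ring)]
  have hI := betaPolyIntegral_generator (ν / μ) hα hc (by field_simp) a m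
  have hJ := betaPolyIntegral_generator (μ / ν) hα hc' (by field_simp) m a
  simp only [betaPolyIntegral] at hI hJ
  simp only [hg, Nat.add_sub_cancel, show a + m + 2 - a = m + 2 by omega,
    show a + m + 2 - (a + 1) = m + 1 by omega, show a + m + 2 - (a + 1 + 1) = m by omega,
    show a + 1 + 1 = a + 2 from rfl]
  split_ifs with hlt
  · push_cast
    linear_combination (Real.exp (-α * t) * d) * hI + (Real.exp (-α * t) * b) * hJ
  · obtain rfl : C = a + 1 := by omega
    have hrefl := betaPolyIntegral_reflecting_boundary (ν / μ) hα hc hc' a m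
    rw [show a + m + 2 - (a + 1) - 1 = m by omega] at hb hd
    simp only [betaPolyIntegral, ← hb, ← hd] at hrefl
    push_cast
    linear_combination (Real.exp (-α * t) * d) * hI + (Real.exp (-α * t) * b) * hJ
      - Real.exp (-α * t) * ν * (m + 1) * hrefl

/-- The combination `g = d·I_α + b·J_α` is space-time harmonic for the Engset generator
(with reflection at `C`) at every state `1 ≤ x ≤ C`, including the boundary `C`. -/
theorem engset_Kalpha_harmonic
    (N C : ℕ) (hC1 : 1 ≤ C) (hCN : C + 1 ≤ N)
    (ν μ : ℝ) (hν : ν ∈ Set.Ioo (0:ℝ) 1) (hμ : μ = 1 - ν)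
    (α : ℝ) (hα : 0 < α) (b d : ℝ)
    (hb : b = ν * ∫ u in Set.Ioo (0:ℝ) 1,
        (1 - u) ^ C * (1 + (ν / μ) * u) ^ (N - C - 1) * u ^ α)
    (hd : d = μ * ∫ u in Set.Ioo (0:ℝ) 1,
        (1 - u) ^ (N - C - 1) * (1 + (μ / ν) * u) ^ C * u ^ α)
    (g : ℕ → ℝ → ℝ)
    (hg : ∀ (x : ℕ) (t : ℝ),
      g x t = d * (Real.exp (-α * t) *
          ∫ u in Set.Ioo (0:ℝ) 1,
            (1 - u) ^ x * (1 + (ν / μ) * u) ^ (N - x) * u ^ (α - 1))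
        + b * (Real.exp (-α * t) *
          ∫ u in Set.Ioo (0:ℝ) 1,
            (1 - u) ^ (N - x) * (1 + (μ / ν) * u) ^ x * u ^ (α - 1))) :
    ∀ (x : ℕ), 1 ≤ x → x ≤ C → ∀ t : ℝ,
      deriv (g x) t
        + μ * x * (g (x - 1) t - g x t)
        + (if x < C then (1:ℝ) else 0) * (ν * ((N : ℝ) - x) * (g (x + 1) t - g x t))
        = 0 :=
  engset_Kalpha_harmonic_general N C hCN ν μ hν hμ α hα b d hb hd g hg
end

section
/- Let 0 < η < ν < 1, μ = 1 − ν, α > 0, and let (C_N) be a sequence of integers with C_N = ηN + O(1). Then lim_{N→∞} N^{1/4} · exp((α − α·log α − α·log(ν/(ν−η)))·√N) · ∫₀^{√N} (1 − u/√N)^{N−C_N} · (1 + (μ/ν)·u/√N)^{C_N} · u^{α√N − 1} du = √(2π/α) · exp((2νη − ν² − η)·α²/(2(ν−η)²)). -/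
/-!
The substitution `u = U + s N^{-1/4}` around the saddle point `U = αν/(ν-η)` turns the left-hand
side into `∫ exp (φ_N s) ds` over a window that exhausts `ℝ`. Expanding the three logarithms to
second order, the terms of order `√N` and `N^{1/4}` cancel, so `φ_N s → V - α s² / (2U²)`.
Each `φ_N` is concave, so its values at `0` and `±1` force a bound `φ_N s ≤ D - δ |s|` uniform
in `N`, and dominated convergence reduces the limit to a Gaussian integral.
-/

open Filter Topology MeasureTheory Asymptotics
open Real Set

noncomputable def logRemainder (y : ℝ) : ℝ := log (1 + y) - y + y ^ 2 / 2

lemma abs_logRemainder_le {y : ℝ} (hy : |y| ≤ 1 / 2) : |logRemainder y| ≤ 2 * |y| ^ 3 :=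
  calc |logRemainder y| = |∑ i ∈ Finset.range 2, (-y) ^ (i + 1) / (i + 1) + log (1 - -y)| := by
        simp only [logRemainder, Finset.sum_range_succ, Finset.sum_range_zero]; norm_num; ring_nf
    _ ≤ |-y| ^ 3 / (1 - |-y|) :=
        abs_log_sub_add_sum_range_le (by rw [abs_neg]; linarith) 2
    _ ≤ 2 * |y| ^ 3 := by
        rw [abs_neg, div_le_iff₀ (by linarith)]
        nlinarith [pow_nonneg (abs_nonneg y) 3]

lemma tendsto_mul_logRemainder {ι : Type*} {l : Filter ι} {A y : ι → ℝ}
    (hy : Tendsto y l (𝓝 0)) (hAy : Tendsto (fun i => A i * y i ^ 3) l (𝓝 0)) :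
    Tendsto (fun i => A i * logRemainder (y i)) l (𝓝 0) := by
  refine squeeze_zero_norm' ?_ (by simpa using hAy.norm.const_mul 2)
  filter_upwards [(tendsto_zero_iff_norm_tendsto_zero.1 hy).eventually
    (eventually_le_nhds (by norm_num : (0 : ℝ) < 1 / 2))] with i hi
  rw [norm_mul, Real.norm_eq_abs, Real.norm_eq_abs, mul_left_comm]
  exact mul_le_mul_of_nonneg_left (abs_logRemainder_le (by simpa using hi)) (abs_nonneg _)

lemma concaveOn_log_affine (a c : ℝ) :
    ConcaveOn ℝ {x | 0 < a + c * x} fun x => log (a + c * x) := by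
  have := strictConcaveOn_log_Ioi.concaveOn.comp_affineMap
    (AffineMap.const ℝ ℝ a + (c • LinearMap.id : ℝ →ₗ[ℝ] ℝ).toAffineMap)
  simpa [Function.comp_def, preimage] using this

lemma ConcaveOn.le_add_sub_mul_of_nonneg {I : Set ℝ} {f : ℝ → ℝ} {δ L s : ℝ}
    (hf : ConcaveOn ℝ I f) (hm1 : (-1 : ℝ) ∈ I) (h1 : (1 : ℝ) ∈ I)
    (hf1 : f 1 ≤ f 0 - δ) (hLm1 : f 0 - f (-1) ≤ L) (hδL : 0 ≤ L + δ)
    (hs : s ∈ I) (hs0 : 0 ≤ s) : f s ≤ f 0 + L + δ - δ * s := by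
  have h0 : (0 : ℝ) ∈ I := hf.1.ordConnected.out hm1 h1 ⟨by norm_num, by norm_num⟩
  rcases hs0.eq_or_lt with rfl | hs0
  · linarith
  rcases lt_trichotomy s 1 with hs1 | rfl | hs1
  · have := hf.slope_anti_adjacent hm1 hs (by norm_num : (-1 : ℝ) < 0) hs0
    rw [sub_zero, sub_neg_eq_add, zero_add, div_one, div_le_iff₀ hs0] at this
    nlinarith
  · linarith
  · have := hf.slope_anti_adjacent h0 hs one_pos hs1
    rw [sub_zero, div_one, div_le_iff₀ (sub_pos.2 hs1)] at this
    nlinarith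

lemma ConcaveOn.le_add_sub_mul_abs {I : Set ℝ} {f : ℝ → ℝ} {δ L : ℝ}
    (hf : ConcaveOn ℝ I f) (hm1 : (-1 : ℝ) ∈ I) (h1 : (1 : ℝ) ∈ I) (hδ : 0 ≤ δ)
    (hf1 : f 1 ≤ f 0 - δ) (hfm1 : f (-1) ≤ f 0 - δ)
    (hL1 : f 0 - f 1 ≤ L) (hLm1 : f 0 - f (-1) ≤ L) {s : ℝ} (hs : s ∈ I) :
    f s ≤ f 0 + L + δ - δ * |s| := by
  rcases le_total 0 s with hs0 | hs0
  · rw [abs_of_nonneg hs0]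
    exact hf.le_add_sub_mul_of_nonneg hm1 h1 hf1 hLm1 (by linarith) hs hs0
  · have hneg : ConcaveOn ℝ (-I) fun x => f (-x) := by
      convert hf.comp_linearMap (-LinearMap.id) using 1 <;> ext x <;> simp
    rw [abs_of_nonpos hs0]
    simpa using hneg.le_add_sub_mul_of_nonneg (by simpa using h1) (by simpa using hm1)
      (by simpa using hfm1) (by simpa using hL1) (by linarith) (by simpa using hs)
      (neg_nonneg.2 hs0)

lemma integrable_exp_neg_mul_abs {δ : ℝ} (hδ : 0 < δ) :
    Integrable fun x : ℝ => exp (-δ * |x|) := by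
  set g := (Ici (0 : ℝ)).indicator fun x => exp (-δ * x)
  have hg : Integrable g := ((integrableOn_Ici_iff_integrableOn_Ioi (by finiteness)).2
    (exp_neg_integrableOn_Ioi 0 hδ)).integrable_indicator measurableSet_Ici
  refine (hg.add hg.comp_neg).mono' (by fun_prop) (Eventually.of_forall fun x => ?_)
  have hg0 : ∀ x, 0 ≤ g x := indicator_nonneg fun _ _ => (exp_pos _).le
  rw [norm_of_nonneg (exp_pos _).le, Pi.add_apply]
  rcases le_total 0 x with hx | hx
  · have : g x = exp (-δ * |x|) := by simp [g, hx, abs_of_nonneg hx]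
    linarith [hg0 (-x)]
  · have : g (-x) = exp (-δ * |x|) := by simp [g, hx, abs_of_nonpos hx]
    linarith [hg0 x]

section Scaling

variable {ι : Type*} {l : Filter ι} {b : ι → ℝ}

lemma eventually_nonneg_mul_pow_four_sub {r : ι → ℝ} {c : ℝ} (hc : 0 < c)
    (hb : Tendsto b l atTop) (hr : r =O[l] fun _ => (1 : ℝ)) :
    ∀ᶠ i in l, 0 ≤ c * b i ^ 4 - r i := by
  obtain ⟨K, hK⟩ := hr.bound
  filter_upwards [hK,
    (((tendsto_pow_atTop four_ne_zero).comp hb).const_mul_atTop hc).eventually_ge_atTop K]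
    with i h1 h2
  simp only [norm_one, mul_one, Real.norm_eq_abs] at h1
  simp only [Function.comp_apply] at h2
  linarith [le_abs_self (r i)]

lemma tendsto_const_add_div (hb : Tendsto b l atTop) (c s : ℝ) :
    Tendsto (fun i => c + s / b i) l (𝓝 c) := by
  simpa [div_eq_mul_inv] using (hb.inv_tendsto_atTop.const_mul s).const_add c

lemma tendsto_pow_mul_div_pow_cube {u : ι → ℝ} {c : ℝ} {m k : ℕ} (hb : Tendsto b l atTop)
    (hu : Tendsto u l (𝓝 c)) (hmk : m < 3 * k) :
    Tendsto (fun i => b i ^ m * (u i / b i ^ k) ^ 3) l (𝓝 0) := by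
  have h := (hu.pow 3).mul (hb.inv_tendsto_atTop.pow (3 * k - m))
  rw [zero_pow (Nat.sub_ne_zero_of_lt hmk), mul_zero] at h
  refine h.congr' ?_
  filter_upwards [hb.eventually_gt_atTop 0] with i hi
  rw [Pi.inv_apply, inv_pow, div_pow, ← pow_mul, mul_comm k, pow_sub₀ _ hi.ne' hmk.le]
  field_simp

end Scaling

namespace EngsetDenominator

variable (η ν μ α : ℝ)

noncomputable def saddle : ℝ := α * ν / (ν - η)

noncomputable def saddleShift (b s : ℝ) : ℝ := saddle η ν α + s / b

/-- For `p = N - C_N`, `q = C_N`, `b = N^{1/4}` this is the logarithm of `e^{c √N}` times the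
integrand at `u = saddleShift η ν α b s`. -/
noncomputable def phase (p q b s : ℝ) : ℝ :=
  (α - α * log α - α * log (ν / (ν - η))) * b ^ 2
    + p * log (1 - saddleShift η ν α b s / b ^ 2)
    + q * log (1 + μ / ν * saddleShift η ν α b s / b ^ 2)
    + (α * b ^ 2 - 1) * log (saddleShift η ν α b s)

noncomputable def limitPhase (s : ℝ) : ℝ :=
  -((1 - η) + η * (μ / ν) ^ 2) / 2 * saddle η ν α ^ 2 - log (saddle η ν α)
    - α / (2 * saddle η ν α ^ 2) * s ^ 2

def window (b : ℝ) : Set ℝ := Ioo (-(saddle η ν α * b)) ((b ^ 2 - saddle η ν α) * b)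

variable {η ν μ α}

lemma saddle_pos (hα : 0 < α) (hν : 0 < ν) (hην : η < ν) : 0 < saddle η ν α :=
  div_pos (mul_pos hα hν) (sub_pos.2 hην)

lemma mem_window {b s : ℝ} (hb : 0 < b) :
    s ∈ window η ν α b ↔ 0 < saddleShift η ν α b s ∧ saddleShift η ν α b s < b ^ 2 := by
  rw [window, saddleShift, mem_Ioo, ← neg_lt_iff_pos_add', ← lt_sub_iff_add_lt',
    lt_div_iff₀ hb, div_lt_iff₀ hb, neg_mul]

lemma eventually_mem_window {ι : Type*} {l : Filter ι} {b : ι → ℝ} (hU : 0 < saddle η ν α)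
    (hb : Tendsto b l atTop) (s : ℝ) : ∀ᶠ i in l, s ∈ window η ν α (b i) := by
  have hu := tendsto_const_add_div hb (saddle η ν α) s
  filter_upwards [hb.eventually_gt_atTop 0, hu.eventually (lt_mem_nhds hU),
    hu.eventually (gt_mem_nhds (lt_add_one _)),
    ((tendsto_pow_atTop two_ne_zero).comp hb).eventually_ge_atTop (saddle η ν α + 1)]
    with i hb0 h1 h2 h3
  exact (mem_window hb0).2 ⟨h1, h2.trans_le h3⟩

lemma concaveOn_phase {p q b : ℝ} (hμν : 0 ≤ μ / ν) (hp : 0 ≤ p) (hq : 0 ≤ q) (hb : 0 < b)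
    (hαb : 1 ≤ α * b ^ 2) : ConcaveOn ℝ (window η ν α b) (phase η ν μ α p q b) := by
  set U := saddle η ν α
  have hlog : ∀ (φ : ℝ → ℝ) (a c : ℝ), (∀ s, φ s = a + c * s) →
      (∀ s ∈ window η ν α b, 0 < φ s) → ConcaveOn ℝ (window η ν α b) fun s => log (φ s) := by
    intro φ a c hφ hpos
    simp only [hφ] at hpos ⊢
    exact (concaveOn_log_affine a c).subset hpos (convex_Ioo _ _)
  have h1 := hlog (fun s => 1 - saddleShift η ν α b s / b ^ 2) (1 - U / b ^ 2) (-(b ^ 3)⁻¹)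
    (fun s => by simp only [saddleShift]; field_simp; ring) fun s hs =>
      sub_pos.2 ((div_lt_one (by positivity)).2 ((mem_window hb).1 hs).2)
  have h2 := hlog (fun s => 1 + μ / ν * saddleShift η ν α b s / b ^ 2) (1 + μ / ν * U / b ^ 2)
    (μ / ν / b ^ 3) (fun s => by simp only [saddleShift]; field_simp; ring) fun s hs => by
      have := ((mem_window hb).1 hs).1
      positivity
  have h3 := hlog (saddleShift η ν α b) U b⁻¹ (fun s => by simp only [saddleShift]; ring)
    fun s hs => ((mem_window hb).1 hs).1
  exact (((concaveOn_const ((α - α * log α - α * log (ν / (ν - η))) * b ^ 2)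
    (convex_Ioo _ _)).add (h1.smul hp)).add (h2.smul hq)).add (h3.smul (sub_nonneg.2 hαb))

/-- The terms of order `b ^ 2` and `b` cancel because `saddle` is the critical point of the
leading part of the phase. -/
lemma phase_eq_expansion (hμ : μ = 1 - ν) (hα : α ≠ 0) (hν : ν ≠ 0) (hνη : ν - η ≠ 0)
    {r b s : ℝ} (hb : b ≠ 0) (hw : 0 < 1 + s / (b * saddle η ν α)) :
    phase η ν μ α ((1 - η) * b ^ 4 - r) (η * b ^ 4 + r) b s =
      -((1 - η) + η * (μ / ν) ^ 2) / 2 * saddleShift η ν α b s ^ 2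
        - α / (2 * saddle η ν α ^ 2) * s ^ 2
        + (1 - η) * b ^ 4 * logRemainder (-(saddleShift η ν α b s / b ^ 2))
        + η * b ^ 4 * logRemainder (μ / ν * saddleShift η ν α b s / b ^ 2)
        + α * b ^ 2 * logRemainder (s / (b * saddle η ν α))
        + r * (log (1 + μ / ν * saddleShift η ν α b s / b ^ 2)
          - log (1 - saddleShift η ν α b s / b ^ 2))
        - log (saddleShift η ν α b s) := by
  have hU : saddle η ν α = α * (ν / (ν - η)) := mul_div_assoc _ _ _
  have hU0 : saddle η ν α ≠ 0 := hU ▸ mul_ne_zero hα (div_ne_zero hν hνη)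
  have hlog : log (saddleShift η ν α b s)
      = log α + log (ν / (ν - η)) + log (1 + s / (b * saddle η ν α)) := by
    rw [← log_mul hα (div_ne_zero hν hνη), ← hU, ← log_mul hU0 hw.ne', saddleShift]
    congr 1; field_simp
  simp only [phase, logRemainder, hlog, ← sub_eq_add_neg]
  simp only [saddleShift]
  rw [hU, hμ]
  field_simp
  ring

lemma tendsto_phase (hμ : μ = 1 - ν) (hα : α ≠ 0) (hν : ν ≠ 0) (hνη : ν - η ≠ 0)
    {ι : Type*} {l : Filter ι} {b r : ι → ℝ} (hb : Tendsto b l atTop)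
    (hr : r =O[l] fun _ => (1 : ℝ)) (s : ℝ) :
    Tendsto (fun i => phase η ν μ α ((1 - η) * b i ^ 4 - r i) (η * b i ^ 4 + r i) (b i) s) l
      (𝓝 (limitPhase η ν μ α s)) := by
  set U := saddle η ν α
  have hU : U ≠ 0 := mul_ne_zero (mul_ne_zero hα hν) (inv_ne_zero hνη)
  set u := fun i => saddleShift η ν α (b i) s
  have hu : Tendsto u l (𝓝 U) := tendsto_const_add_div hb U s
  have hx : Tendsto (fun i => u i / b i ^ 2) l (𝓝 0) := by
    simpa [div_eq_mul_inv] using hu.mul (hb.inv_tendsto_atTop.pow 2)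
  have hx3 : Tendsto (fun i => b i ^ 4 * (u i / b i ^ 2) ^ 3) l (𝓝 0) :=
    tendsto_pow_mul_div_pow_cube hb hu (by norm_num)
  have hw : Tendsto (fun i => s / (b i * U)) l (𝓝 0) := by
    simpa [div_mul_eq_div_div_swap] using tendsto_const_add_div hb 0 (s / U)
  have T1 := tendsto_mul_logRemainder (A := fun i => (1 - η) * b i ^ 4)
    (y := fun i => -(u i / b i ^ 2)) (by simpa using hx.neg)
    (by convert (hx3.const_mul (1 - η)).neg using 2 <;> ring)
  have T2 := tendsto_mul_logRemainder (A := fun i => η * b i ^ 4)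
    (y := fun i => μ / ν * u i / b i ^ 2) (by simpa [mul_div_assoc] using hx.const_mul (μ / ν))
    (by convert hx3.const_mul (η * (μ / ν) ^ 3) using 2 <;> ring)
  have T3 := tendsto_mul_logRemainder (A := fun i => α * b i ^ 2) hw
    (by convert (tendsto_pow_mul_div_pow_cube (u := fun _ => s / U) (m := 2) (k := 1) hb
      tendsto_const_nhds (by norm_num)).const_mul α using 2 <;> ring)
  have T4 : Tendsto (fun i => r i * (log (1 + μ / ν * u i / b i ^ 2)
      - log (1 - u i / b i ^ 2))) l (𝓝 0) := by
    have h : Tendsto (fun i => log (1 + μ / ν * u i / b i ^ 2) - log (1 - u i / b i ^ 2)) l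
        (𝓝 0) := by
      simpa [mul_div_assoc] using (((hx.const_mul (μ / ν)).const_add 1).log (by simp)).sub
        ((hx.const_sub 1).log (by simp))
    simpa [mul_comm] using h.zero_mul_isBoundedUnder_le ((isBigO_one_iff ℝ).1 hr)
  have key := (((((((hu.pow 2).const_mul (-((1 - η) + η * (μ / ν) ^ 2) / 2)).sub_const
    (α / (2 * U ^ 2) * s ^ 2)).add T1).add T2).add T3).add T4).sub (hu.log hU)
  convert key.congr' (f₂ := fun i =>
    phase η ν μ α ((1 - η) * b i ^ 4 - r i) (η * b i ^ 4 + r i) (b i) s) ?_ using 2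
  · simp only [limitPhase, U]; ring
  filter_upwards [hb.eventually_gt_atTop 0,
    hw.eventually (eventually_gt_nhds (by norm_num : (-1 : ℝ) < 0))] with i hi hwi
  exact (phase_eq_expansion hμ hα hν hνη hi.ne' (by linarith)).symm


lemma eventually_phase_le_sub_mul_abs (hη : 0 < η) (hην : η < ν) (hν : ν < 1)
    (hμ : μ = 1 - ν) (hα : 0 < α) {ι : Type*} {l : Filter ι} {b r : ι → ℝ}
    (hb : Tendsto b l atTop) (hr : r =O[l] fun _ => (1 : ℝ)) :
    ∃ D δ, 0 < δ ∧ ∀ᶠ i in l, ∀ s ∈ window η ν α (b i),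
      phase η ν μ α ((1 - η) * b i ^ 4 - r i) (η * b i ^ 4 + r i) (b i) s ≤ D - δ * |s| := by
  have hν0 : 0 < ν := hη.trans hην
  have hU := saddle_pos hα hν0 hην
  set f := fun i => phase η ν μ α ((1 - η) * b i ^ 4 - r i) (η * b i ^ 4 + r i) (b i)
  set V := limitPhase η ν μ α 0
  set κ := α / (2 * saddle η ν α ^ 2)
  have hκ : 0 < κ := by positivity
  have hlim : ∀ s, Tendsto (fun i => f i s) l (𝓝 (V - κ * s ^ 2)) := fun s => by
    convert tendsto_phase hμ hα.ne' hν0.ne' (sub_pos.2 hην).ne' hb hr s using 2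
    simp only [V, κ, limitPhase]; ring
  have h0 : Tendsto (fun i => f i 0) l (𝓝 V) := by simpa using hlim 0
  have hdrop : ∀ s, s ^ 2 = 1 → ∀ᶠ i in l, f i s ≤ f i 0 - κ / 2 ∧ f i 0 - f i s ≤ κ + 1 := by
    intro s hs
    have h := (hlim s).sub h0
    rw [hs, mul_one, sub_sub_cancel_left] at h
    filter_upwards [h.eventually (ge_mem_nhds (by linarith : -κ < -(κ / 2))),
      h.eventually (lt_mem_nhds (by linarith : -(κ + 1) < -κ))] with i h1 h2
    constructor <;> linarith
  refine ⟨V + 1 + (κ + 1) + κ / 2, κ / 2, by positivity, ?_⟩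
  filter_upwards [hb.eventually_gt_atTop 0,
    ((tendsto_pow_atTop two_ne_zero).comp hb).eventually_ge_atTop α⁻¹,
    eventually_nonneg_mul_pow_four_sub (sub_pos.2 (hην.trans hν)) hb hr,
    eventually_nonneg_mul_pow_four_sub hη hb hr.neg_left,
    eventually_mem_window hU hb 1, eventually_mem_window hU hb (-1),
    hdrop 1 (by norm_num), hdrop (-1) (by norm_num), h0.eventually (ge_mem_nhds (lt_add_one V))]
    with i hb0 hαb hp hq h1 hm1 ⟨hf1, hL1⟩ ⟨hfm1, hLm1⟩ hf0 s hs
  have hconc : ConcaveOn ℝ (window η ν α (b i)) (f i) :=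
    concaveOn_phase (by rw [hμ]; exact div_nonneg (by linarith) hν0.le) hp (by simpa using hq)
      hb0 (by simpa [inv_le_iff_one_le_mul₀' hα] using hαb)
  linarith [hconc.le_add_sub_mul_abs hm1 h1 (by positivity) hf1 hfm1 hL1 hLm1 hs]

lemma tendsto_integral_window_exp_phase (hη : 0 < η) (hην : η < ν) (hν : ν < 1)
    (hμ : μ = 1 - ν) (hα : 0 < α) {ι : Type*} {l : Filter ι} [l.IsCountablyGenerated]
    {b r : ι → ℝ} (hb : Tendsto b l atTop) (hr : r =O[l] fun _ => (1 : ℝ)) :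
    Tendsto (fun i => ∫ s in window η ν α (b i),
        exp (phase η ν μ α ((1 - η) * b i ^ 4 - r i) (η * b i ^ 4 + r i) (b i) s)) l
      (𝓝 (∫ s, exp (limitPhase η ν μ α s))) := by
  have hν0 : 0 < ν := hη.trans hην
  obtain ⟨D, δ, hδ, hle⟩ := eventually_phase_le_sub_mul_abs hη hην hν hμ hα hb hr
  have hmeas : ∀ b, MeasurableSet (window η ν α b) := fun _ => measurableSet_Ioo
  refine (tendsto_congr fun i => integral_indicator (hmeas (b i))).mp ?_
  refine tendsto_integral_filter_of_dominated_convergence (fun s => exp D * exp (-δ * |s|))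
    (Eventually.of_forall fun i => ?_) ?_ ((integrable_exp_neg_mul_abs hδ).const_mul _)
    (Eventually.of_forall fun s => ?_)
  · exact (Measurable.indicator (by unfold phase saddleShift; fun_prop)
      measurableSet_Ioo).aestronglyMeasurable
  · filter_upwards [hle] with i hi
    refine Eventually.of_forall fun s => ?_
    by_cases hs : s ∈ window η ν α (b i)
    · rw [indicator_of_mem hs, norm_of_nonneg (exp_pos _).le, ← exp_add]
      exact exp_le_exp.2 (by linarith [hi s hs])
    · rw [indicator_of_notMem hs, norm_zero]
      positivity
  · refine ((tendsto_phase hμ hα.ne' hν0.ne' (sub_pos.2 hην).ne' hb hr s).rexp).congr' ?_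
    filter_upwards [eventually_mem_window (saddle_pos hα hν0 hην) hb s] with i hs
    rw [indicator_of_mem hs]

lemma integral_exp_limitPhase (hα : 0 < α) (hν : 0 < ν) (hην : η < ν) (hμ : μ = 1 - ν) :
    ∫ s, exp (limitPhase η ν μ α s) =
      √(2 * π / α) * exp ((2 * ν * η - ν ^ 2 - η) * α ^ 2 / (2 * (ν - η) ^ 2)) := by
  have hνη : ν - η ≠ 0 := (sub_pos.2 hην).ne'
  have hU := saddle_pos hα hν hην
  set V := limitPhase η ν μ α 0
  set κ := α / (2 * saddle η ν α ^ 2)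
  have hsplit : ∀ s, exp (limitPhase η ν μ α s) = exp V * exp (-κ * s ^ 2) := fun s => by
    rw [← exp_add]; simp only [V, κ, limitPhase]; ring_nf
  have hsqrt : √(π / κ) = √(2 * π / α) * saddle η ν α := by
    rw [show π / κ = 2 * π / α * saddle η ν α ^ 2 by simp only [κ]; field_simp,
      sqrt_mul (by positivity), sqrt_sq hU.le]
  simp_rw [hsplit, integral_const_mul, integral_gaussian, hsqrt, V, limitPhase, exp_sub,
    exp_log hU, zero_pow two_ne_zero, mul_zero, exp_zero, div_one]
  rw [hμ, saddle]
  field_simp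
  ring_nf

lemma integral_window_exp_phase (hμν : 0 ≤ μ / ν) (n k : ℕ) {b : ℝ} (hb : 0 < b) :
    ∫ s in window η ν α b, exp (phase η ν μ α n k b s) =
      b * exp ((α - α * log α - α * log (ν / (ν - η))) * b ^ 2) *
        ∫ u in Ioo 0 (b ^ 2),
          (1 - u / b ^ 2) ^ n * (1 + μ / ν * u / b ^ 2) ^ k * u ^ (α * b ^ 2 - 1) := by
  set g := fun u : ℝ =>
    (1 - u / b ^ 2) ^ n * (1 + μ / ν * u / b ^ 2) ^ k * u ^ (α * b ^ 2 - 1)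
  have hpt : ∀ s ∈ window η ν α b, exp (phase η ν μ α n k b s) =
      exp ((α - α * log α - α * log (ν / (ν - η))) * b ^ 2) * g (saddleShift η ν α b s) := by
    intro s hs
    obtain ⟨hu0, hub⟩ := (mem_window hb).1 hs
    have h1 : 0 < 1 - saddleShift η ν α b s / b ^ 2 :=
      sub_pos.2 ((div_lt_one (by positivity)).2 hub)
    have h2 : 0 < 1 + μ / ν * saddleShift η ν α b s / b ^ 2 := by positivity
    simp only [phase, g, exp_add]
    rw [← log_pow, ← log_pow, exp_log (pow_pos h1 n), exp_log (pow_pos h2 k),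
      rpow_def_of_pos hu0, mul_comm (log _)]
    ring
  have hAB : -(saddle η ν α * b) ≤ (b ^ 2 - saddle η ν α) * b := by nlinarith
  rw [setIntegral_congr_fun (s := window η ν α b) measurableSet_Ioo hpt,
    integral_const_mul, window, ← integral_Ioc_eq_integral_Ioo,
    ← intervalIntegral.integral_of_le hAB]
  simp only [saddleShift]
  rw [intervalIntegral.integral_comp_add_div (f := g) hb.ne',
    show saddle η ν α + -(saddle η ν α * b) / b = 0 by field_simp; ring,
    show saddle η ν α + (b ^ 2 - saddle η ν α) * b / b = b ^ 2 by field_simp; ring,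
    intervalIntegral.integral_of_le (by positivity), integral_Ioc_eq_integral_Ioo, smul_eq_mul]
  ring

end EngsetDenominator

open EngsetDenominator

/-- Laplace-method asymptotics for the denominator integral in the super-critical regime. -/
theorem supercritical_denominator_asymptotics
    (η ν μ α : ℝ) (hη : 0 < η) (hην : η < ν) (hν : ν < 1) (hμ : μ = 1 - ν)
    (hα : 0 < α) (C : ℕ → ℕ)
    (hC : (fun N : ℕ => (C N : ℝ) - η * N) =O[atTop] fun _ : ℕ => (1 : ℝ)) :
    Tendsto (fun N : ℕ =>
        (N : ℝ) ^ ((1:ℝ)/4) *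
          Real.exp ((α - α * Real.log α - α * Real.log (ν / (ν - η))) * Real.sqrt N) *
          ∫ u in Set.Ioo (0:ℝ) (Real.sqrt N),
            (1 - u / Real.sqrt N) ^ (N - C N) *
              (1 + (μ / ν) * u / Real.sqrt N) ^ (C N) *
              u ^ (α * Real.sqrt N - 1))
      atTop
      (𝓝 (Real.sqrt (2 * Real.pi / α) *
        Real.exp ((2 * ν * η - ν ^ 2 - η) * α ^ 2 / (2 * (ν - η) ^ 2)))) := by
  set b : ℕ → ℝ := fun N => (N : ℝ) ^ ((1 : ℝ) / 4)
  have hb : Tendsto b atTop atTop :=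
    (tendsto_rpow_atTop (by norm_num)).comp tendsto_natCast_atTop_atTop
  have hb_pow : ∀ (N k : ℕ), b N ^ k = (N : ℝ) ^ ((k : ℝ) / 4) := fun N k => by
    rw [← rpow_natCast, ← rpow_mul (Nat.cast_nonneg N)]; ring_nf
  have hb2 : ∀ N : ℕ, b N ^ 2 = √N := fun N => by rw [hb_pow, sqrt_eq_rpow]; norm_num
  have hb4 : ∀ N : ℕ, b N ^ 4 = N := fun N => by rw [hb_pow]; norm_num
  have hlim := tendsto_integral_window_exp_phase hη hην hν hμ hα hb hC
  rw [integral_exp_limitPhase hα (hη.trans hην) hην hμ] at hlim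
  refine hlim.congr' ?_
  filter_upwards [hb.eventually_gt_atTop 0,
    eventually_nonneg_mul_pow_four_sub (sub_pos.2 (hην.trans hν)) hb hC] with N hbN hCN
  have hCN : C N ≤ N := by rw [hb4] at hCN; exact_mod_cast (by linarith : (C N : ℝ) ≤ N)
  rw [show (1 - η) * b N ^ 4 - (C N - η * N) = ((N - C N : ℕ) : ℝ) by
      rw [hb4, Nat.cast_sub hCN]; ring,
    show η * b N ^ 4 + (C N - η * N) = (C N : ℝ) by rw [hb4]; ring,
    integral_window_exp_phase (by rw [hμ]; exact div_nonneg (by linarith) (by linarith)) _ _ hbN,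
    hb2]
end

section
/- Let ν ∈ (0,1) and α > 0, and set α_N = α·N·ν^N. Then lim_{N→∞} α_N · ∫₀¹ (1−u)^N u^{α_N − 1} du = 1. -/
open Filter Topology MeasureTheory Set intervalIntegral

/-!
Since `1 - N u ≤ (1 - u) ^ N ≤ 1` on `(0, 1)` and `∫₀¹ u ^ (a - 1) du = 1 / a`, we get
`1 - a N ≤ a ∫₀¹ (1 - u) ^ N u ^ (a - 1) du ≤ 1` for every `a > 0`. With `a = α N ν ^ N`
the lower bound is `1 - α N² ν ^ N → 1`.
-/

lemma integral_Ioo_zero_one_rpow {r : ℝ} (hr : -1 < r) :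
    ∫ u in Ioo (0:ℝ) 1, u ^ r = 1 / (r + 1) := by
  rw [← integral_Ioc_eq_integral_Ioo, ← integral_of_le zero_le_one,
    integral_rpow (Or.inl hr), Real.one_rpow, Real.zero_rpow (by linarith)]
  ring

lemma integrableOn_one_sub_pow_mul_rpow (N : ℕ) {r : ℝ} (hr : -1 < r) :
    IntegrableOn (fun u : ℝ => (1 - u) ^ N * u ^ r) (Ioo 0 1) :=
  IntegrableOn.continuousOn_mul_of_subset (by fun_prop) ((integrableOn_Ioo_rpow_iff one_pos).2 hr)
    isCompact_Icc measurableSet_Ioo Ioo_subset_Icc_self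

lemma one_sub_mul_le_one_sub_pow {u : ℝ} (hu : u ≤ 2) (N : ℕ) :
    1 - N * u ≤ (1 - u) ^ N := by
  simpa [sub_eq_add_neg] using one_add_mul_le_pow (a := -u) (by linarith) N

section

variable {a : ℝ} (N : ℕ)

lemma mul_integral_one_sub_pow_mul_rpow_le_one (ha : 0 < a) :
    a * ∫ u in Ioo (0:ℝ) 1, (1 - u) ^ N * u ^ (a - 1) ≤ 1 := by
  have hmono : ∫ u in Ioo (0:ℝ) 1, (1 - u) ^ N * u ^ (a - 1) ≤
      ∫ u in Ioo (0:ℝ) 1, u ^ (a - 1) := by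
    refine setIntegral_mono_on (integrableOn_one_sub_pow_mul_rpow N (by linarith))
      ((integrableOn_Ioo_rpow_iff one_pos).2 (by linarith)) measurableSet_Ioo fun u hu => ?_
    have : (1 - u) ^ N ≤ 1 := pow_le_one₀ (by linarith [hu.2]) (by linarith [hu.1])
    exact mul_le_of_le_one_left (Real.rpow_nonneg hu.1.le _) this
  calc a * ∫ u in Ioo (0:ℝ) 1, (1 - u) ^ N * u ^ (a - 1)
      ≤ a * ∫ u in Ioo (0:ℝ) 1, u ^ (a - 1) := mul_le_mul_of_nonneg_left hmono ha.le
    _ = 1 := by rw [integral_Ioo_zero_one_rpow (by linarith), sub_add_cancel]; field_simp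

lemma one_sub_mul_le_mul_integral_one_sub_pow_mul_rpow (ha : 0 < a) :
    1 - a * N ≤ a * ∫ u in Ioo (0:ℝ) 1, (1 - u) ^ N * u ^ (a - 1) := by
  have hint₁ := (integrableOn_Ioo_rpow_iff one_pos).2 (by linarith : -1 < a - 1)
  have hint₂ := ((integrableOn_Ioo_rpow_iff one_pos).2 (by linarith : -1 < a)).const_mul (N : ℝ)
  have hmono : ∫ u in Ioo (0:ℝ) 1, (u ^ (a - 1) - N * u ^ a) ≤
      ∫ u in Ioo (0:ℝ) 1, (1 - u) ^ N * u ^ (a - 1) := by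
    refine setIntegral_mono_on (hint₁.sub hint₂)
      (integrableOn_one_sub_pow_mul_rpow N (by linarith)) measurableSet_Ioo fun u hu => ?_
    have hsplit : u ^ a = u ^ (a - 1) * u := by
      rw [← Real.rpow_add_one hu.1.ne', sub_add_cancel]
    rw [hsplit]
    nlinarith [one_sub_mul_le_one_sub_pow (by linarith [hu.2] : u ≤ 2) N,
      Real.rpow_nonneg hu.1.le (a - 1)]
  rw [MeasureTheory.integral_sub hint₁ hint₂, MeasureTheory.integral_const_mul,
    integral_Ioo_zero_one_rpow (by linarith), integral_Ioo_zero_one_rpow (by linarith),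
    sub_add_cancel] at hmono
  have hN : 0 ≤ a * N := by positivity
  calc 1 - a * N ≤ 1 - a * N / (a + 1) := by gcongr; exact div_le_self hN (by linarith)
    _ = a * (1 / a - N * (1 / (a + 1))) := by field_simp
    _ ≤ _ := mul_le_mul_of_nonneg_left hmono ha.le

end

/-- Sub-critical regime: asymptotics of the numerator `∫₀¹ (1-u)^N u^{α_N-1} du ∼ 1/α_N`
with `α_N = α N ν^N`. -/
theorem subcritical_numerator_asymptotics (ν α : ℝ) (hν : ν ∈ Set.Ioo (0:ℝ) 1) (hα : 0 < α) :
    Tendsto (fun N : ℕ =>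
        (α * N * ν ^ N) *
          ∫ u in Set.Ioo (0:ℝ) 1, (1 - u) ^ N * u ^ (α * N * ν ^ N - 1))
      atTop (𝓝 1) := by
  obtain ⟨hν₀, hν₁⟩ := hν
  have hlower : Tendsto (fun N : ℕ => 1 - α * N * ν ^ N * N) atTop (𝓝 1) := by
    have h := ((tendsto_pow_const_mul_const_pow_of_lt_one 2 hν₀.le hν₁).const_mul α).const_sub
      (1 : ℝ)
    rw [mul_zero, sub_zero] at h
    exact h.congr fun N => by ring
  refine tendsto_of_tendsto_of_tendsto_of_le_of_le' hlower tendsto_const_nhds ?_ ?_ <;>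
    filter_upwards [eventually_gt_atTop 0] with N hN
  · exact one_sub_mul_le_mul_integral_one_sub_pow_mul_rpow N (by positivity)
  · exact mul_integral_one_sub_pow_mul_rpow_le_one N (by positivity)
end

section
/- Let ν ∈ (0,1), μ = 1 − ν, α > 0, and set α_N = α·N·ν^N. Then lim_{N→∞} α_N · ∫₀¹ [ (1 + (μ/ν)u)^N − 1 ] · u^{α_N − 1} du = α/μ. -/
open Filter Topology MeasureTheory Finset

/-!
Expanding `(1 + (μ/ν) u)^N` binomially and integrating term by term gives
`α_N Δ_N = α N ∑_{k=1}^N b_k / (k + α_N)` with the binomial weights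
`b_k = C(N,k) μ^k ν^(N-k)`. Since `α_N → 0`, eventually `α_N ≤ 1`, and then
`1/(k+1) ≤ 1/(k + α_N) ≤ 1/k ≤ 1/(k+1) + 3/((k+1)(k+2))` for `k ≥ 1`.
The identities `C(N,k)/(k+1) = C(N+1,k+1)/(N+1)` and
`C(N,k)/((k+1)(k+2)) = C(N+2,k+2)/((N+1)(N+2))` turn the weighted sums of
`1/(k+1)` and `1/((k+1)(k+2))` into tails of binomial expansions of `(μ + ν)^(N+1)` and
`(μ + ν)^(N+2)`: the first is `(1 - ν^(N+1))/((N+1)μ)`, the second at most `1/((N+1)(N+2)μ²)`.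
Multiplied by `α N`, both bounds tend to `α/μ`.
-/

lemma integrableOn_rpow_sub_one_Ioo_zero_one {s : ℝ} (hs : 0 < s) :
    IntegrableOn (fun u : ℝ => u ^ (s - 1)) (Set.Ioo 0 1) :=
  (intervalIntegral.integrableOn_Ioo_rpow_iff one_pos).2 (by linarith)

lemma integral_rpow_sub_one_Ioo_zero_one {s : ℝ} (hs : 0 < s) :
    ∫ u in Set.Ioo (0 : ℝ) 1, u ^ (s - 1) = 1 / s := by
  rw [← integral_Ioc_eq_integral_Ioo, ← intervalIntegral.integral_of_le zero_le_one,
    integral_rpow (Or.inl (by linarith)), sub_add_cancel, Real.one_rpow,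
    Real.zero_rpow hs.ne', sub_zero]

lemma integral_one_add_mul_pow_mul_rpow (c : ℝ) {a : ℝ} (ha : 0 < a) (N : ℕ) :
    ∫ u in Set.Ioo (0 : ℝ) 1, (1 + c * u) ^ N * u ^ (a - 1)
      = ∑ k ∈ range (N + 1), (N.choose k : ℝ) * c ^ k / (k + a) := by
  have expand : Set.EqOn (fun u : ℝ => (1 + c * u) ^ N * u ^ (a - 1))
      (fun u => ∑ k ∈ range (N + 1), (N.choose k : ℝ) * c ^ k * u ^ ((k + a) - 1))
      (Set.Ioo 0 1) := fun u hu => by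
    dsimp only
    rw [add_comm 1, add_pow, sum_mul]
    refine sum_congr rfl fun k _ => ?_
    rw [add_sub_assoc, Real.rpow_add hu.1, Real.rpow_natCast]
    ring
  have hk : ∀ k : ℕ, 0 < (k : ℝ) + a := fun k => by positivity
  rw [setIntegral_congr_fun measurableSet_Ioo expand,
    integral_finsetSum _ fun k _ => (integrableOn_rpow_sub_one_Ioo_zero_one (hk k)).const_mul _]
  refine sum_congr rfl fun k _ => ?_
  rw [integral_const_mul, integral_rpow_sub_one_Ioo_zero_one (hk k), mul_one_div]

lemma integral_one_add_mul_pow_sub_one_mul_rpow (c : ℝ) {a : ℝ} (ha : 0 < a) (N : ℕ) :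
    ∫ u in Set.Ioo (0 : ℝ) 1, ((1 + c * u) ^ N - 1) * u ^ (a - 1)
      = ∑ k ∈ range N, (N.choose (k + 1) : ℝ) * c ^ (k + 1) / (k + 1 + a) := by
  have hint : IntegrableOn (fun u : ℝ => (1 + c * u) ^ N * u ^ (a - 1)) (Set.Ioo 0 1) :=
    (integrableOn_rpow_sub_one_Ioo_zero_one ha).continuousOn_mul_of_subset (by fun_prop)
      isCompact_Icc measurableSet_Ioo Set.Ioo_subset_Icc_self
  simp only [sub_mul, one_mul]
  rw [integral_sub hint (integrableOn_rpow_sub_one_Ioo_zero_one ha),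
    integral_one_add_mul_pow_mul_rpow c ha, integral_rpow_sub_one_Ioo_zero_one ha,
    sum_range_succ']
  simp

lemma mul_integral_eq_sum_choose_mul_pow {q b : ℝ} (p : ℝ) (hq : 0 < q) (hb : 0 < b) (N : ℕ) :
    b * q ^ N * ∫ u in Set.Ioo (0 : ℝ) 1, ((1 + p / q * u) ^ N - 1) * u ^ (b * q ^ N - 1)
      = b * ∑ k ∈ range N,
          (N.choose (k + 1) : ℝ) * p ^ (k + 1) * q ^ (N - (k + 1)) / (k + 1 + b * q ^ N) := by
  rw [integral_one_add_mul_pow_sub_one_mul_rpow _ (by positivity), mul_assoc, mul_sum]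
  refine congrArg (b * ·) (sum_congr rfl fun k hk => ?_)
  rw [← pow_sub_mul_pow q (mem_range.1 hk), div_pow]
  field_simp

lemma sum_choose_mul_pow_div_succ {p : ℝ} (hp : p ≠ 0) (q : ℝ) (N : ℕ) :
    ∑ k ∈ range (N + 1), (N.choose k : ℝ) * p ^ k * q ^ (N - k) / (k + 1)
      = ((p + q) ^ (N + 1) - q ^ (N + 1)) / ((N + 1) * p) := by
  have hterm : ∀ k ∈ range (N + 1), (N.choose k : ℝ) * p ^ k * q ^ (N - k) / (k + 1)
      = (N + 1).choose (k + 1) * p ^ (k + 1) * q ^ (N + 1 - (k + 1)) / ((N + 1) * p) := by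
    intro k _
    have hchoose : ((N + 1 : ℕ) : ℝ) * N.choose k
        = (N + 1).choose (k + 1) * ((k + 1 : ℕ) : ℝ) := by
      exact_mod_cast Nat.add_one_mul_choose_eq N k
    push_cast at hchoose
    rw [Nat.add_sub_add_right, div_eq_div_iff (by positivity) (by positivity)]
    linear_combination p ^ k * q ^ (N - k) * p * hchoose
  rw [sum_congr rfl hterm, ← sum_div, add_pow, sum_range_succ' _ (N + 1)]
  simp only [pow_zero, Nat.choose_zero_right, Nat.cast_one, one_mul, mul_one, Nat.sub_zero,
    add_sub_cancel_right]
  congr 1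
  exact sum_congr rfl fun k _ => by ring

lemma sum_choose_mul_pow_div_succ_mul_add_two_le {p q : ℝ} (hp : 0 < p) (hq : 0 ≤ q) (N : ℕ) :
    ∑ k ∈ range (N + 1), (N.choose k : ℝ) * p ^ k * q ^ (N - k) / ((k + 1) * (k + 2))
      ≤ (p + q) ^ (N + 2) / ((N + 1) * (N + 2) * p ^ 2) := by
  set b : ℕ → ℝ := fun j => p ^ j * q ^ (N + 2 - j) * (N + 2).choose j
  have hterm : ∀ k ∈ range (N + 1),
      (N.choose k : ℝ) * p ^ k * q ^ (N - k) / ((k + 1) * (k + 2))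
        = b (k + 2) / ((N + 1) * (N + 2) * p ^ 2) := by
    intro k _
    have h₁ : ((N + 1 : ℕ) : ℝ) * N.choose k
        = (N + 1).choose (k + 1) * ((k + 1 : ℕ) : ℝ) := by
      exact_mod_cast Nat.add_one_mul_choose_eq N k
    have h₂ : ((N + 2 : ℕ) : ℝ) * (N + 1).choose (k + 1)
        = (N + 2).choose (k + 2) * ((k + 2 : ℕ) : ℝ) := by
      exact_mod_cast Nat.add_one_mul_choose_eq (N + 1) (k + 1)
    push_cast at h₁ h₂
    simp only [b, show N + 2 - (k + 2) = N - k by omega]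
    rw [div_eq_div_iff (by positivity) (by positivity)]
    linear_combination p ^ k * q ^ (N - k) * p ^ 2 * ((N + 2) * h₁ + (k + 1) * h₂)
  have hbinom : (p + q) ^ (N + 2) = ∑ k ∈ range (N + 1), b (k + 2) + b 1 + b 0 := by
    rw [add_pow, sum_range_succ', sum_range_succ']
  rw [sum_congr rfl hterm, ← sum_div, hbinom]
  gcongr
  have hb : ∀ j, 0 ≤ b j := fun j => by positivity
  linarith [hb 0, hb 1]

lemma div_add_le_div_add_one_add {w x a : ℝ} (hw : 0 ≤ w) (hx : 1 ≤ x) (ha : 0 ≤ a) :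
    w / (x + a) ≤ w / (x + 1) + 3 * (w / ((x + 1) * (x + 2))) := by
  calc w / (x + a) ≤ w / x := div_le_div_of_nonneg_left hw (by linarith) (by linarith)
    _ ≤ w / (x + 1) + 3 * (w / ((x + 1) * (x + 2))) := by
      rw [mul_div_assoc', div_add_div _ _ (by positivity) (by positivity),
        div_le_div_iff₀ (by positivity) (by positivity)]
      have : 0 ≤ w * (x - 1) := mul_nonneg hw (by linarith)
      nlinarith

lemma sum_choose_succ_mul_pow_div_add_one {p : ℝ} (hp : p ≠ 0) (q : ℝ) (N : ℕ) :
    ∑ k ∈ range N, (N.choose (k + 1) : ℝ) * p ^ (k + 1) * q ^ (N - (k + 1)) / (k + 1 + 1)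
      = ((p + q) ^ (N + 1) - q ^ (N + 1)) / ((N + 1) * p) - q ^ N := by
  rw [← sum_choose_mul_pow_div_succ hp, sum_range_succ']
  simp

lemma sum_choose_succ_mul_pow_div_add_ge {p q a : ℝ} (hp : 0 < p) (hq : 0 ≤ q) (ha : 0 < a)
    (ha₁ : a ≤ 1) (N : ℕ) :
    ((p + q) ^ (N + 1) - q ^ (N + 1)) / ((N + 1) * p) - q ^ N
      ≤ ∑ k ∈ range N,
          (N.choose (k + 1) : ℝ) * p ^ (k + 1) * q ^ (N - (k + 1)) / (k + 1 + a) := by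
  rw [← sum_choose_succ_mul_pow_div_add_one hp.ne']
  gcongr

lemma sum_choose_succ_mul_pow_div_add_le {p q a : ℝ} (hp : 0 < p) (hq : 0 ≤ q) (ha : 0 ≤ a)
    (N : ℕ) :
    ∑ k ∈ range N, (N.choose (k + 1) : ℝ) * p ^ (k + 1) * q ^ (N - (k + 1)) / (k + 1 + a)
      ≤ ((p + q) ^ (N + 1) - q ^ (N + 1)) / ((N + 1) * p) - q ^ N
        + 3 * (p + q) ^ (N + 2) / ((N + 1) * (N + 2) * p ^ 2) := by
  set w : ℕ → ℝ := fun k => N.choose k * p ^ k * q ^ (N - k)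
  have hw : ∀ k, 0 ≤ w k := fun k => by positivity
  have htail : ∑ k ∈ range N, w (k + 1) / ((k + 1 + 1) * (k + 1 + 2))
      ≤ (p + q) ^ (N + 2) / ((N + 1) * (N + 2) * p ^ 2) := by
    refine le_trans ?_ (sum_choose_mul_pow_div_succ_mul_add_two_le hp hq N)
    rw [sum_range_succ' _ N]
    push_cast
    exact le_add_of_nonneg_right (by positivity)
  calc ∑ k ∈ range N, w (k + 1) / (k + 1 + a)
      ≤ ∑ k ∈ range N,
          (w (k + 1) / (k + 1 + 1) + 3 * (w (k + 1) / ((k + 1 + 1) * (k + 1 + 2)))) := by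
        gcongr with k
        exact div_add_le_div_add_one_add (hw _) (by simp) ha
    _ ≤ _ := by
      rw [sum_add_distrib, ← mul_sum, sum_choose_succ_mul_pow_div_add_one hp.ne', mul_div_assoc]
      gcongr

lemma tendsto_mul_natCast_mul_one_sub_pow_div_sub_pow {q : ℝ} (hq₀ : 0 ≤ q) (hq₁ : q < 1)
    (c p : ℝ) :
    Tendsto (fun N : ℕ => c * N * ((1 - q ^ (N + 1)) / ((N + 1) * p) - q ^ N))
      atTop (𝓝 (c / p)) := by
  have hfrac : Tendsto (fun N : ℕ => c / p * ((N : ℝ) / (N + 1)) * (1 - q * q ^ N))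
      atTop (𝓝 (c / p * 1 * (1 - q * 0))) :=
    ((tendsto_natCast_div_add_atTop (1 : ℝ)).const_mul _).mul
      (((tendsto_pow_atTop_nhds_zero_of_lt_one hq₀ hq₁).const_mul q).const_sub 1)
  have hpow : Tendsto (fun N : ℕ => c * (N * q ^ N)) atTop (𝓝 (c * 0)) :=
    (tendsto_self_mul_const_pow_of_lt_one hq₀ hq₁).const_mul c
  have h := hfrac.sub hpow
  simp only [mul_one, mul_zero, sub_zero] at h
  refine h.congr fun N => ?_
  simp only [div_eq_mul_inv, mul_inv]
  ring

lemma tendsto_mul_natCast_mul_div_succ_mul_succ_succ (c d e : ℝ) :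
    Tendsto (fun N : ℕ => c * N * (d / ((N + 1) * (N + 2) * e))) atTop (𝓝 0) := by
  have h : Tendsto (fun N : ℕ => c * d / e * ((N : ℝ) / (N + 1)) * ((N : ℝ) + 2)⁻¹)
      atTop (𝓝 (c * d / e * 1 * 0)) :=
    ((tendsto_natCast_div_add_atTop (1 : ℝ)).const_mul _).mul
      (tendsto_atTop_add_const_right _ 2 tendsto_natCast_atTop_atTop).inv_tendsto_atTop
  rw [mul_zero] at h
  refine h.congr fun N => ?_
  simp only [div_eq_mul_inv, mul_inv]
  ring

/-- Sub-critical regime: the key estimate `α_N Δ_N → α/μ` with `α_N = α N ν^N` and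
`Δ_N = ∫₀¹ ((1+(μ/ν)u)^N - 1) u^{α_N-1} du`. -/
theorem subcritical_DeltaN_asymptotics
    (ν μ α : ℝ) (hν : ν ∈ Set.Ioo (0:ℝ) 1) (hμ : μ = 1 - ν) (hα : 0 < α) :
    Tendsto (fun N : ℕ =>
        (α * N * ν ^ N) *
          ∫ u in Set.Ioo (0:ℝ) 1,
            ((1 + (μ / ν) * u) ^ N - 1) * u ^ (α * N * ν ^ N - 1))
      atTop (𝓝 (α / μ)) := by
  obtain ⟨hν₀, hν₁⟩ := hν
  have hμ₀ : 0 < μ := by linarith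
  have hμν : μ + ν = 1 := by linarith
  have hsmall : ∀ᶠ N : ℕ in atTop, α * N * ν ^ N ≤ 1 := by
    have h := (tendsto_self_mul_const_pow_of_lt_one hν₀.le hν₁).const_mul α
    rw [mul_zero] at h
    filter_upwards [h.eventually (eventually_le_nhds one_pos)] with N hN
    rwa [mul_assoc]
  have hlower := tendsto_mul_natCast_mul_one_sub_pow_div_sub_pow hν₀.le hν₁ α μ
  have hupper := hlower.add (tendsto_mul_natCast_mul_div_succ_mul_succ_succ α 3 (μ ^ 2))
  rw [add_zero] at hupper
  refine tendsto_of_tendsto_of_tendsto_of_le_of_le' hlower hupper ?_ ?_ <;>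
    filter_upwards [hsmall, eventually_ge_atTop 1] with N hN₁ hN <;>
    have hαN : 0 < α * N := by positivity
  · rw [mul_integral_eq_sum_choose_mul_pow μ hν₀ hαN]
    have h := sum_choose_succ_mul_pow_div_add_ge hμ₀ hν₀.le (by positivity) hN₁ N
    rw [hμν, one_pow] at h
    gcongr
  · rw [mul_integral_eq_sum_choose_mul_pow μ hν₀ hαN, ← mul_add]
    have h := sum_choose_succ_mul_pow_div_add_le (a := α * N * ν ^ N) hμ₀ hν₀.le
      (by positivity) N
    rw [hμν, one_pow, one_pow, mul_one] at h
    gcongr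
end

section
/- Let 0 < ν < η < 1, μ = 1 − ν, α > 0, let (C_N) be a sequence of integers with 1 ≤ C_N ≤ N−1 and C_N = ηN + O(1), and set α_N = α·N·(1−ν)^N. Then lim_{N→∞} N · ν ∫₀¹ (1−u)^{C_N} (1 + (ν/μ)u)^{N−C_N−1} u^{α_N} du = ν(1−ν)/(η−ν). -/
/-!
Substituting `u = x / N` turns `N · ∫₀¹ (1 - u)^{C_N} (1 + c u)^{M_N} u^{α_N} du`, with `c = ν/μ`
and `M_N = N - C_N - 1`, into `∫₀^N (1 - x/N)^{C_N} (1 + c x/N)^{M_N} (x/N)^{α_N} dx`.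
Since `C_N/N → η`, `M_N/N → 1 - η` and `α_N log N → 0`, the integrand tends to
`exp (-(η - c (1 - η)) x)`, and `1 + y ≤ eʸ` together with `C_N, M_N = ηN, (1-η)N + O(1)` bounds it
by a constant multiple of the same exponential, which is integrable because
`η - c (1 - η) = (η - ν)/(1 - ν) > 0`. Dominated convergence gives the limit `(1 - ν)/(η - ν)`.
-/

open Filter Topology MeasureTheory Asymptotics Set Real

lemma tendsto_div_natCast_of_isBigO_one {x : ℕ → ℝ} {a : ℝ}
    (hx : (fun N : ℕ => x N - a * N) =O[atTop] fun _ => (1 : ℝ)) :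
    Tendsto (fun N : ℕ => x N / N) atTop (𝓝 a) := by
  have h : Tendsto (fun N : ℕ => (x N - a * N) * (N : ℝ)⁻¹) atTop (𝓝 0) := by
    refine (hx.mul (isBigO_refl (fun N : ℕ => (N : ℝ)⁻¹) atTop)).trans_tendsto ?_
    simpa using tendsto_inv_atTop_nhds_zero_nat (𝕜 := ℝ)
  refine (h.add_const a).congr' ?_ |>.trans (by rw [zero_add])
  filter_upwards [eventually_ne_atTop 0] with N hN
  field_simp
  ring

lemma tendsto_one_add_div_pow_of_tendsto_div {k : ℕ → ℕ} {a : ℝ}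
    (hk : Tendsto (fun N : ℕ => (k N : ℝ) / N) atTop (𝓝 a)) (t : ℝ) :
    Tendsto (fun N : ℕ => (1 + t / N) ^ k N) atTop (𝓝 (exp (a * t))) := by
  have hlog := hk.mul ((tendsto_mul_log_one_add_div_atTop t).comp tendsto_natCast_atTop_atTop)
  refine ((continuous_exp.tendsto _).comp hlog).congr' ?_
  have hpos : ∀ᶠ N : ℕ in atTop, 0 < 1 + t / N := by
    have := (tendsto_const_div_atTop_nhds_zero_nat t).const_add 1
    exact this.eventually (lt_mem_nhds (by simp))
  filter_upwards [hpos, eventually_ne_atTop 0] with N hN hN0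
  rw [Function.comp_apply, Function.comp_apply, ← mul_assoc,
    div_mul_cancel₀ _ (by exact_mod_cast hN0), exp_nat_mul, exp_log hN]

lemma one_add_pow_le_exp_mul {x : ℝ} (hx : -1 ≤ x) (k : ℕ) : (1 + x) ^ k ≤ exp (k * x) := by
  rw [exp_nat_mul]
  exact pow_le_pow_left₀ (by linarith) (by linarith [add_one_le_exp x]) k

lemma tendsto_div_natCast_rpow_of_tendsto_mul_log {a : ℕ → ℝ} (ha : Tendsto a atTop (𝓝 0))
    (ha_log : Tendsto (fun N : ℕ => a N * log N) atTop (𝓝 0)) {u : ℝ} (hu : 0 < u) :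
    Tendsto (fun N : ℕ => (u / N) ^ a N) atTop (𝓝 1) := by
  have h := (continuous_exp.tendsto _).comp ((ha.mul_const (log u)).sub ha_log)
  rw [zero_mul, sub_zero, exp_zero] at h
  refine h.congr' ?_
  filter_upwards [eventually_ne_atTop 0] with N hN
  rw [Function.comp_apply, rpow_def_of_pos (by positivity),
    log_div hu.ne' (by exact_mod_cast hN)]
  ring_nf

lemma tendsto_mul_natCast_mul_pow_mul_log {r : ℝ} (hr0 : 0 ≤ r) (hr1 : r < 1) (α : ℝ) :
    Tendsto (fun N : ℕ => α * N * r ^ N * log N) atTop (𝓝 0) := by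
  have hlog : (fun N : ℕ => log N) =o[atTop] fun N : ℕ => (N : ℝ) :=
    isLittleO_log_id_atTop.comp_tendsto tendsto_natCast_atTop_atTop
  refine ((hlog.mul_isBigO (isBigO_refl (fun N : ℕ => α * N * r ^ N) atTop)).trans_tendsto ?_).congr
    fun N => by ring
  simpa [pow_two, mul_assoc, mul_left_comm] using
    (tendsto_pow_const_mul_const_pow_of_lt_one 2 hr0 hr1).const_mul α

lemma mul_integral_Ioo_zero_one_eq {r : ℝ} (hr : 0 < r) (g : ℝ → ℝ) :
    r * ∫ u in Ioo 0 1, g u = ∫ x in Ioc 0 r, g (x / r) := by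
  rw [← intervalIntegral.integral_of_le hr.le, intervalIntegral.integral_comp_div g hr.ne',
    zero_div, div_self hr.ne', intervalIntegral.integral_of_le zero_le_one,
    integral_Ioc_eq_integral_Ioo, smul_eq_mul]

theorem tendsto_natCast_mul_integral_Ioo_of_dominated {g : ℕ → ℝ → ℝ} {f bound : ℝ → ℝ}
    (hg : ∀ N, Measurable (g N)) (hbound : IntegrableOn bound (Ioi 0))
    (hdom : ∀ᶠ N : ℕ in atTop, ∀ x ∈ Ioc 0 (N : ℝ), ‖g N (x / N)‖ ≤ bound x)
    (hlim : ∀ x > 0, Tendsto (fun N : ℕ => g N (x / N)) atTop (𝓝 (f x))) :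
    Tendsto (fun N : ℕ => N * ∫ u in Ioo 0 1, g N u) atTop (𝓝 (∫ x in Ioi 0, f x)) := by
  set F : ℕ → ℝ → ℝ := fun N => (Ioc 0 (N : ℝ)).indicator fun x => g N (x / N)
  have hF_eq : ∀ᶠ N : ℕ in atTop, ∫ x in Ioi 0, F N x = N * ∫ u in Ioo 0 1, g N u := by
    filter_upwards [eventually_gt_atTop 0] with N hN
    rw [mul_integral_Ioo_zero_one_eq (by exact_mod_cast hN), setIntegral_indicator measurableSet_Ioc,
      inter_eq_right.mpr Ioc_subset_Ioi_self]
  have hF_eventually (x : ℝ) (hx : 0 < x) :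
      (fun N : ℕ => g N (x / N)) =ᶠ[atTop] fun N => F N x := by
    filter_upwards [tendsto_natCast_atTop_atTop.eventually_ge_atTop x] with N hN
    exact (indicator_of_mem (mem_Ioc.mpr ⟨hx, hN⟩) fun x => g N (x / N)).symm
  have hbound_nonneg (x : ℝ) (hx : 0 < x) : 0 ≤ bound x := by
    obtain ⟨N, hN, hxN⟩ := (hdom.and (tendsto_natCast_atTop_atTop.eventually_ge_atTop x)).exists
    exact (norm_nonneg (g N (x / N))).trans (hN x (mem_Ioc.mpr ⟨hx, hxN⟩))
  refine (tendsto_integral_filter_of_dominated_convergence bound ?_ ?_ hbound ?_).congr' hF_eq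
  · exact .of_forall fun N =>
      (((hg N).comp (measurable_id.div_const _)).indicator measurableSet_Ioc).aestronglyMeasurable
  · filter_upwards [hdom] with N hN
    refine ae_restrict_of_forall_mem measurableSet_Ioi fun x hx => ?_
    by_cases hxN : x ∈ Ioc 0 (N : ℝ)
    · simpa only [F, indicator_of_mem hxN] using hN x hxN
    · simpa only [F, indicator_of_notMem hxN, norm_zero] using hbound_nonneg x hx
  · exact ae_restrict_of_forall_mem measurableSet_Ioi fun x hx =>
      (hlim x hx).congr' (hF_eventually x hx)

lemma one_sub_pow_mul_one_add_pow_mul_rpow_le {c η θ K L N x a : ℝ} {k m : ℕ}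
    (hc : 0 ≤ c) (hK : 0 ≤ K) (hL : 0 ≤ L) (ha : 0 ≤ a) (hx : 0 < x) (hxN : x ≤ N)
    (hk : η * N - K ≤ k) (hm : m ≤ θ * N + L) :
    (1 - x / N) ^ k * (1 + c * (x / N)) ^ m * (x / N) ^ a ≤
      exp (K + c * L) * exp (-(η - c * θ) * x) := by
  have hN : 0 < N := hx.trans_le hxN
  set v := x / N with hv
  have hv0 : 0 ≤ v := by positivity
  have hv1 : v ≤ 1 := (div_le_one hN).mpr hxN
  have hNv : N * v = x := by rw [hv]; field_simp
  have h₁ : (1 - v) ^ k ≤ exp (-(η * x) + K) := by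
    refine (sub_eq_add_neg 1 v ▸ one_add_pow_le_exp_mul (by linarith) k).trans (exp_le_exp.mpr ?_)
    nlinarith [mul_le_mul_of_nonneg_right hk hv0]
  have h₂ : (1 + c * v) ^ m ≤ exp (c * θ * x + c * L) := by
    refine (one_add_pow_le_exp_mul (by nlinarith) m).trans (exp_le_exp.mpr ?_)
    have hLv : c * L * v ≤ c * L := mul_le_of_le_one_right (mul_nonneg hc hL) hv1
    have hθ : (θ * N + L) * (c * v) = c * θ * x + c * L * v := by rw [← hNv]; ring
    linarith [mul_le_mul_of_nonneg_right hm (mul_nonneg hc hv0)]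
  have h₃ : v ^ a ≤ 1 := rpow_le_one hv0 hv1 ha
  calc (1 - v) ^ k * (1 + c * v) ^ m * v ^ a
      ≤ exp (-(η * x) + K) * exp (c * θ * x + c * L) * 1 := by gcongr
    _ = exp (K + c * L) * exp (-(η - c * θ) * x) := by
        rw [mul_one, ← exp_add, ← exp_add]; ring_nf

lemma tendsto_one_sub_pow_mul_one_add_pow_mul_rpow {c η θ x : ℝ} {k m : ℕ → ℕ} {a : ℕ → ℝ}
    (hk : Tendsto (fun N : ℕ => (k N : ℝ) / N) atTop (𝓝 η))
    (hm : Tendsto (fun N : ℕ => (m N : ℝ) / N) atTop (𝓝 θ))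
    (ha : Tendsto (fun N : ℕ => (x / N) ^ a N) atTop (𝓝 1)) :
    Tendsto (fun N : ℕ => (1 - x / N) ^ k N * (1 + c * (x / N)) ^ m N * (x / N) ^ a N) atTop
      (𝓝 (exp (-(η - c * θ) * x))) := by
  have h := ((tendsto_one_add_div_pow_of_tendsto_div hk (-x)).mul
    (tendsto_one_add_div_pow_of_tendsto_div hm (c * x))).mul ha
  rw [mul_one, ← exp_add] at h
  convert h using 3 with N <;> ring

theorem tendsto_natCast_mul_integral_one_sub_pow_mul_one_add_pow_mul_rpow {c η θ : ℝ}
    {k m : ℕ → ℕ} {a : ℕ → ℝ} (hc : 0 ≤ c) (hθ : c * θ < η)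
    (hk : (fun N : ℕ => (k N : ℝ) - η * N) =O[atTop] fun _ => (1 : ℝ))
    (hm : (fun N : ℕ => (m N : ℝ) - θ * N) =O[atTop] fun _ => (1 : ℝ))
    (ha_nonneg : ∀ N, 0 ≤ a N) (ha : Tendsto a atTop (𝓝 0))
    (ha_log : Tendsto (fun N : ℕ => a N * log N) atTop (𝓝 0)) :
    Tendsto (fun N : ℕ => N * ∫ u in Ioo 0 1, (1 - u) ^ k N * (1 + c * u) ^ m N * u ^ a N)
      atTop (𝓝 (η - c * θ)⁻¹) := by
  obtain ⟨K, hK, hkK⟩ := hk.exists_pos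
  obtain ⟨L, hL, hmL⟩ := hm.exists_pos
  have hδ : -(η - c * θ) < 0 := by linarith
  have hint : ∫ x in Ioi 0, exp (-(η - c * θ) * x) = (η - c * θ)⁻¹ := by
    rw [integral_exp_mul_Ioi hδ, mul_zero, exp_zero, neg_div, div_neg, neg_neg, one_div]
  rw [← hint]
  refine tendsto_natCast_mul_integral_Ioo_of_dominated (by fun_prop)
    ((integrableOn_exp_mul_Ioi hδ 0).const_mul (exp (K + c * L))) ?_ fun x hx =>
    tendsto_one_sub_pow_mul_one_add_pow_mul_rpow (tendsto_div_natCast_of_isBigO_one hk)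
      (tendsto_div_natCast_of_isBigO_one hm) (tendsto_div_natCast_rpow_of_tendsto_mul_log ha ha_log hx)
  filter_upwards [hkK.bound, hmL.bound] with N hkN hmN x hx
  simp only [norm_one, mul_one, Real.norm_eq_abs, abs_le] at hkN hmN
  rw [Real.norm_of_nonneg]
  · exact one_sub_pow_mul_one_add_pow_mul_rpow_le hc hK.le hL.le (ha_nonneg N) hx.1 hx.2
      (by linarith) (by linarith)
  · have hxN : x / N ≤ 1 := div_le_one_of_le₀ hx.2 (Nat.cast_nonneg N)
    have hx0 : 0 ≤ x / N := div_nonneg hx.1.le (Nat.cast_nonneg N)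
    exact mul_nonneg (mul_nonneg (pow_nonneg (by linarith) _) (pow_nonneg (by positivity) _))
      (rpow_nonneg hx0 _)

/-- Sub-critical regime: asymptotics of the coefficient `b_N(α_N)`, namely
`N · b_N(α_N) → ν(1-ν)/(η-ν)`. -/
theorem subcritical_bN_asymptotics
    (ν η μ α : ℝ) (hν : 0 < ν) (hνη : ν < η) (hη : η < 1) (hμ : μ = 1 - ν)
    (hα : 0 < α) (C : ℕ → ℕ)
    (hC1 : ∀ᶠ N in atTop, 1 ≤ C N ∧ C N + 1 ≤ N)
    (hC : (fun N : ℕ => (C N : ℝ) - η * N) =O[atTop] fun _ : ℕ => (1 : ℝ))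
    (αN : ℕ → ℝ) (hαN : ∀ N : ℕ, αN N = α * N * (1 - ν) ^ N) :
    Tendsto (fun N : ℕ =>
        (N : ℝ) * (ν * ∫ u in Set.Ioo (0:ℝ) 1,
          (1 - u) ^ (C N) * (1 + (ν / μ) * u) ^ (N - C N - 1) * u ^ (αN N)))
      atTop (𝓝 (ν * (1 - ν) / (η - ν))) := by
  subst hμ
  have hμ : 0 < 1 - ν := by linarith
  have hM : (fun N : ℕ => ((N - C N - 1 : ℕ) : ℝ) - (1 - η) * N) =O[atTop] fun _ => (1 : ℝ) := by
    refine (hC.neg_left.sub (isBigO_refl _ _)).congr' ?_ EventuallyEq.rfl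
    filter_upwards [hC1] with N hN
    rw [Nat.sub_sub, Nat.cast_sub hN.2]
    push_cast
    ring
  have hαN_lim : Tendsto αN atTop (𝓝 0) := by
    have h := (tendsto_pow_const_mul_const_pow_of_lt_one 1 hμ.le (by linarith)).const_mul α
    rw [mul_zero] at h
    exact h.congr fun N => by rw [hαN]; ring
  have hαN_log : Tendsto (fun N : ℕ => αN N * log N) atTop (𝓝 0) := by
    simpa only [hαN] using tendsto_mul_natCast_mul_pow_mul_log hμ.le (by linarith) α
  have hcθ : ν / (1 - ν) * (1 - η) < η := by
    rw [div_mul_eq_mul_div, div_lt_iff₀ hμ]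
    nlinarith
  have key := tendsto_natCast_mul_integral_one_sub_pow_mul_one_add_pow_mul_rpow
    (div_nonneg hν.le hμ.le) hcθ hC hM (fun N => by rw [hαN]; positivity) hαN_lim hαN_log
  have hlim : ν * (η - ν / (1 - ν) * (1 - η))⁻¹ = ν * (1 - ν) / (η - ν) := by
    field_simp
    ring
  rw [← hlim]
  exact (key.const_mul ν).congr fun N => by ring
end

section
/- Let ν ∈ (0,1), μ = 1 − ν, δ ∈ ℝ, α > 0, and let (C_N) be a sequence of integers with C_N = νN + δ√N + o(√N). Then lim_{N→∞} N^{α/2} · [∫₀¹ (1−u)^N u^{α−1} du] / [∫₀¹ (1−u)^{N−C_N} (1 + (μ/ν)u)^{C_N} u^{α−1} du] = Γ(α) / ∫₀^∞ exp(δu/ν − (1−ν)u²/(2ν)) u^{α−1} du. -/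
/-!
Substituting `u = t / √N` turns `N^{α/2}` times the denominator into
`∫₀^{√N} (1 - t/√N)^{N-C_N} (1 + (μ/ν) t/√N)^{C_N} t^{α-1} dt`. Expanding both logarithms to
second order, the first-order terms add up to `t (C_N - νN) / (ν √N) → δt/ν` because
`1 + μ/ν = 1/ν`, so the integrand converges pointwise to `exp(δt/ν - (1-ν)t²/(2ν)) t^{α-1}`, while
`log (1 - s) ≤ -s - s²/2` and `log (1 + x) ≤ x` bound it by a Gaussian uniformly in `N`, so
dominated convergence applies. The numerator is the Beta integral `N! / ∏_{j ≤ N} (α + j)`, and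
`N^α` times it tends to `Γ(α)` by Euler's limit formula.
-/

open Filter Topology MeasureTheory Asymptotics Set Real

namespace Real

lemma abs_log_one_add_sub_self_add_sq_div_two_le {x : ℝ} (hx : |x| < 1) :
    |log (1 + x) - x + x ^ 2 / 2| ≤ |x| ^ 3 / (1 - |x|) := by
  have h := abs_log_sub_add_sum_range_le (x := -x) (by rwa [abs_neg]) 2
  simp only [Finset.sum_range_succ, Finset.sum_range_zero, sub_neg_eq_add, abs_neg] at h
  convert h using 2
  norm_num
  ring

lemma log_one_sub_le_neg_sub_sq_div_two {s : ℝ} (h0 : 0 ≤ s) (h1 : s < 1) :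
    log (1 - s) ≤ -s - s ^ 2 / 2 := by
  have hs := hasSum_pow_div_log_of_abs_lt_one (by rwa [abs_of_nonneg h0])
  have hle : ∑ n ∈ Finset.range 2, s ^ (n + 1) / ((n : ℝ) + 1) ≤ -log (1 - s) :=
    sum_le_hasSum _ (fun i _ => by positivity) hs
  norm_num [Finset.sum_range_succ] at hle
  linarith

/-- Equal to `0` at `x = 0`, where its limit is `-1/2`. -/
noncomputable def logOneAddSubSelfDivSq (x : ℝ) : ℝ := (log (1 + x) - x) / x ^ 2

lemma log_one_add_eq_add_sq_mul (x : ℝ) :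
    log (1 + x) = x + x ^ 2 * logOneAddSubSelfDivSq x := by
  rcases eq_or_ne x 0 with rfl | hx
  · simp
  · rw [logOneAddSubSelfDivSq]
    field_simp
    ring

lemma tendsto_logOneAddSubSelfDivSq :
    Tendsto logOneAddSubSelfDivSq (𝓝[≠] 0) (𝓝 (-1 / 2)) := by
  have hsmall : Tendsto (fun x : ℝ => |x| / (1 - |x|)) (𝓝 0) (𝓝 0) := by
    have : ContinuousAt (fun x : ℝ => |x| / (1 - |x|)) 0 :=
      (continuous_abs.continuousAt).div (continuous_const.sub continuous_abs).continuousAt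
        (by simp)
    simpa using this.tendsto
  rw [tendsto_iff_norm_sub_tendsto_zero]
  refine squeeze_zero' (Eventually.of_forall fun _ => norm_nonneg _) ?_
    (hsmall.mono_left nhdsWithin_le_nhds)
  filter_upwards [self_mem_nhdsWithin,
    nhdsWithin_le_nhds (eventually_abs_sub_lt 0 one_pos)] with x (hx0 : x ≠ 0) hx1
  rw [sub_zero] at hx1
  have hsq : 0 < x ^ 2 := by positivity
  have key : logOneAddSubSelfDivSq x - -1 / 2 = (log (1 + x) - x + x ^ 2 / 2) / x ^ 2 := by
    rw [logOneAddSubSelfDivSq]; field_simp; ring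
  rw [Real.norm_eq_abs, key, abs_div, abs_of_pos hsq, div_le_iff₀ hsq]
  calc |log (1 + x) - x + x ^ 2 / 2| ≤ |x| ^ 3 / (1 - |x|) :=
        abs_log_one_add_sub_self_add_sq_div_two_le hx1
    _ = |x| / (1 - |x|) * x ^ 2 := by rw [← sq_abs x]; ring

lemma tendsto_sq_mul_logOneAddSubSelfDivSq_const_mul {ι : Type*} {l : Filter ι} {x : ι → ℝ}
    (hx : Tendsto x l (𝓝[≠] 0)) (c : ℝ) :
    Tendsto (fun i => c ^ 2 * logOneAddSubSelfDivSq (c * x i)) l (𝓝 (-c ^ 2 / 2)) := by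
  rcases eq_or_ne c 0 with rfl | hc
  · simpa using tendsto_const_nhds
  have hcx : Tendsto (fun i => c * x i) l (𝓝[≠] 0) := by
    refine tendsto_nhdsWithin_iff.mpr ⟨?_, ?_⟩
    · simpa using (tendsto_nhdsWithin_iff.mp hx).1.const_mul c
    · filter_upwards [(tendsto_nhdsWithin_iff.mp hx).2] with i hi
      exact mul_ne_zero hc hi
  have h := (tendsto_logOneAddSubSelfDivSq.comp hcx).const_mul (c ^ 2)
  rwa [mul_div_assoc', mul_neg_one] at h

lemma one_sub_pow_mul_one_add_mul_pow_le {s c : ℝ} (hs0 : 0 ≤ s) (hs1 : s < 1) (hc : 0 ≤ c)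
    (m k : ℕ) :
    (1 - s) ^ m * (1 + c * s) ^ k ≤ exp (k * (c * s) - m * (s + s ^ 2 / 2)) := by
  have h₁ : 1 - s ≤ exp (-s - s ^ 2 / 2) := by
    rw [← exp_log (sub_pos.mpr hs1)]
    exact exp_le_exp.mpr (log_one_sub_le_neg_sub_sq_div_two hs0 hs1)
  have h₂ : 1 + c * s ≤ exp (c * s) := by linarith [add_one_le_exp (c * s)]
  have h₃ : 0 ≤ 1 - s := by linarith
  calc (1 - s) ^ m * (1 + c * s) ^ k ≤ exp (-s - s ^ 2 / 2) ^ m * exp (c * s) ^ k := by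
        gcongr
    _ = exp (k * (c * s) - m * (s + s ^ 2 / 2)) := by
        rw [← exp_nat_mul, ← exp_nat_mul, ← exp_add]
        ring_nf

end Real

lemma tendsto_div_of_isLittleO_sub_mul {ι : Type*} {l : Filter ι} {f g : ι → ℝ} {δ : ℝ}
    (h : (fun i => f i - δ * g i) =o[l] g) (hg : ∀ᶠ i in l, g i ≠ 0) :
    Tendsto (fun i => f i / g i) l (𝓝 δ) := by
  have hlim := h.tendsto_div_nhds_zero.add_const δ
  rw [zero_add] at hlim
  refine hlim.congr' ?_
  filter_upwards [hg] with i hi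
  field_simp
  ring

lemma tendsto_natCast_sqrt_atTop : Tendsto (fun N : ℕ => √(N : ℝ)) atTop atTop :=
  tendsto_sqrt_atTop.comp tendsto_natCast_atTop_atTop

lemma tendsto_div_sqrt_nhdsNE_zero {t : ℝ} (ht : t ≠ 0) :
    Tendsto (fun N : ℕ => t / √(N : ℝ)) atTop (𝓝[≠] 0) := by
  refine tendsto_nhdsWithin_iff.mpr ⟨tendsto_natCast_sqrt_atTop.const_div_atTop t, ?_⟩
  filter_upwards [tendsto_natCast_sqrt_atTop.eventually_gt_atTop 0] with N hN
  exact div_ne_zero ht hN.ne'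

section SqrtScale

variable {ν δ : ℝ} {a : ℕ → ℝ}

lemma tendsto_div_natCast_of_tendsto_sub_div_sqrt
    (ha : Tendsto (fun N : ℕ => (a N - ν * N) / √(N : ℝ)) atTop (𝓝 δ)) :
    Tendsto (fun N : ℕ => a N / N) atTop (𝓝 ν) := by
  have h := (ha.mul tendsto_natCast_sqrt_atTop.inv_tendsto_atTop).add_const ν
  rw [mul_zero, zero_add] at h
  refine h.congr' ?_
  filter_upwards [eventually_gt_atTop 0] with N hN
  have hN0 : (0 : ℝ) < N := Nat.cast_pos.mpr hN
  rw [Pi.inv_apply, ← div_eq_mul_inv, div_div, mul_self_sqrt hN0.le]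
  field_simp
  ring

lemma eventually_le_mul_of_tendsto_sub_div_sqrt
    (ha : Tendsto (fun N : ℕ => (a N - ν * N) / √(N : ℝ)) atTop (𝓝 δ)) {ρ : ℝ}
    (hρ : ν < ρ) :
    ∀ᶠ N : ℕ in atTop, a N ≤ ρ * N := by
  filter_upwards [(tendsto_div_natCast_of_tendsto_sub_div_sqrt ha).eventually_lt_const hρ,
    eventually_gt_atTop 0] with N hN hN0
  rw [div_lt_iff₀ (Nat.cast_pos.mpr hN0)] at hN
  exact hN.le

lemma sub_mul_neg_div_sqrt_add_mul_eq {t a N : ℝ} (hν : ν ≠ 0) (hN : 0 < N) :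
    (N - a) * -(t / √N) + a * ((1 - ν) / ν * (t / √N)) = t / ν * ((a - ν * N) / √N) := by
  have hsq := sqrt_pos.mpr hN
  field_simp
  ring

lemma sub_mul_div_sqrt_sq_eq {t a N : ℝ} (hN : 0 < N) :
    (N - a) * (t / √N) ^ 2 = t ^ 2 * (1 - a / N) := by
  rw [div_pow, sq_sqrt hN.le]
  field_simp

lemma sub_mul_log_one_sub_add_mul_log_one_add_eq {t a N : ℝ} (hν : ν ≠ 0) (hN : 0 < N) :
    (N - a) * log (1 - t / √N) + a * log (1 + (1 - ν) / ν * (t / √N))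
      = t / ν * ((a - ν * N) / √N)
        + t ^ 2 * (1 - a / N) * ((-1) ^ 2 * logOneAddSubSelfDivSq (-1 * (t / √N)))
        + t ^ 2 * (a / N)
          * (((1 - ν) / ν) ^ 2 * logOneAddSubSelfDivSq ((1 - ν) / ν * (t / √N))) := by
  rw [show 1 - t / √N = 1 + -1 * (t / √N) by ring, log_one_add_eq_add_sq_mul,
    log_one_add_eq_add_sq_mul]
  have hs2 : (t / √N) ^ 2 = t ^ 2 / N := by rw [div_pow, sq_sqrt hN.le]
  linear_combination sub_mul_neg_div_sqrt_add_mul_eq (t := t) (a := a) hν hN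
    + logOneAddSubSelfDivSq (-1 * (t / √N)) * sub_mul_div_sqrt_sq_eq (t := t) (a := a) hN
    + a * ((1 - ν) / ν) ^ 2 * logOneAddSubSelfDivSq ((1 - ν) / ν * (t / √N)) * hs2

lemma tendsto_sub_mul_log_one_sub_add_mul_log_one_add (hν : ν ≠ 0) {t : ℝ} (ht : t ≠ 0)
    (ha : Tendsto (fun N : ℕ => (a N - ν * N) / √(N : ℝ)) atTop (𝓝 δ)) :
    Tendsto (fun N : ℕ => (N - a N) * log (1 - t / √(N : ℝ))
        + a N * log (1 + (1 - ν) / ν * (t / √(N : ℝ))))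
      atTop (𝓝 (δ * t / ν - (1 - ν) * t ^ 2 / (2 * ν))) := by
  have hs := tendsto_div_sqrt_nhdsNE_zero ht
  have hr := tendsto_div_natCast_of_tendsto_sub_div_sqrt ha
  have hlim := ((ha.const_mul (t / ν)).add
    ((((hr.const_sub 1).const_mul (t ^ 2)).mul
      (tendsto_sq_mul_logOneAddSubSelfDivSq_const_mul hs (-1))))).add
    ((hr.const_mul (t ^ 2)).mul (tendsto_sq_mul_logOneAddSubSelfDivSq_const_mul hs ((1 - ν) / ν)))
  have hval : t / ν * δ + t ^ 2 * (1 - ν) * (-(-1) ^ 2 / 2)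
      + t ^ 2 * ν * (-((1 - ν) / ν) ^ 2 / 2) = δ * t / ν - (1 - ν) * t ^ 2 / (2 * ν) := by
    field_simp
    ring
  rw [hval] at hlim
  refine hlim.congr' ?_
  filter_upwards [eventually_gt_atTop 0] with N hN
  exact (sub_mul_log_one_sub_add_mul_log_one_add_eq hν (Nat.cast_pos.mpr hN)).symm

end SqrtScale


lemma integral_Ioo_one_sub_pow_mul_rpow {α : ℝ} (hα : 0 < α) (N : ℕ) :
    ∫ u in Ioo (0 : ℝ) 1, (1 - u) ^ N * u ^ (α - 1)
      = N.factorial / ∏ j ∈ Finset.range (N + 1), (α + j) := by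
  have hbeta := Complex.betaIntegral_eval_nat_add_one_right (u := α) (by simpa using hα) N
  rw [← integral_Ioc_eq_integral_Ioo, ← intervalIntegral.integral_of_le zero_le_one]
  apply Complex.ofReal_injective
  push_cast
  rw [← hbeta, Complex.betaIntegral, ← intervalIntegral.integral_ofReal]
  refine intervalIntegral.integral_congr fun u hu => ?_
  rw [uIcc_of_le zero_le_one] at hu
  rw [show ((N : ℂ) + 1 - 1) = (N : ℕ) by ring, Complex.cpow_natCast,
    show ((α : ℂ) - 1) = ((α - 1 : ℝ) : ℂ) by push_cast; ring, ← Complex.ofReal_cpow hu.1]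
  push_cast
  ring

lemma tendsto_rpow_mul_integral_Ioo_one_sub_pow_mul_rpow {α : ℝ} (hα : 0 < α) :
    Tendsto (fun N : ℕ => (N : ℝ) ^ α * ∫ u in Ioo (0 : ℝ) 1, (1 - u) ^ N * u ^ (α - 1))
      atTop (𝓝 (Gamma α)) :=
  (GammaSeq_tendsto_Gamma α).congr fun N => by
    rw [integral_Ioo_one_sub_pow_mul_rpow hα, GammaSeq, mul_div_assoc]

lemma rpow_mul_integral_Ioo_zero_one_eq (g : ℝ → ℝ) {b : ℝ} (hb : 0 < b) (α : ℝ) :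
    b ^ α * ∫ u in Ioo (0 : ℝ) 1, g u * u ^ (α - 1)
      = ∫ t in Ioi (0 : ℝ), (Ioo 0 b).indicator (fun t => g (t / b) * t ^ (α - 1)) t := by
  set h := (Ioo (0 : ℝ) 1).indicator fun u => g u * u ^ (α - 1) with hh
  have hrescale : ∀ t, (Ioo 0 b).indicator (fun t => g (t / b) * t ^ (α - 1)) t
      = b ^ (α - 1) * h (b⁻¹ * t) := by
    intro t
    have hmem : b⁻¹ * t ∈ Ioo (0 : ℝ) 1 ↔ t ∈ Ioo 0 b := by
      rw [← div_eq_inv_mul, mem_Ioo, mem_Ioo, div_pos_iff_of_pos_right hb, div_lt_one hb]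
    by_cases ht : t ∈ Ioo 0 b
    · rw [hh, indicator_of_mem ht, indicator_of_mem (hmem.mpr ht), ← div_eq_inv_mul,
        div_rpow ht.1.le hb.le]
      field_simp
    · rw [hh, indicator_of_notMem ht, indicator_of_notMem (mt hmem.mp ht), mul_zero]
  have hsub := integral_comp_mul_left_Ioi h 0 (inv_pos.mpr hb)
  rw [mul_zero, inv_inv, smul_eq_mul] at hsub
  simp_rw [hrescale]
  rw [integral_const_mul, hsub, ← mul_assoc, ← rpow_add_one hb.ne', sub_add_cancel,
    setIntegral_indicator measurableSet_Ioo, inter_eq_right.mpr Ioo_subset_Ioi_self]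

lemma integrableOn_exp_mul_sub_mul_sq_mul_rpow (A : ℝ) {B α : ℝ} (hB : 0 < B) (hα : 0 < α) :
    IntegrableOn (fun t => exp (A * t - B * t ^ 2) * t ^ (α - 1)) (Ioi 0) := by
  refine ((GammaIntegral_convergent hα).const_mul (exp ((A + 1) ^ 2 / (4 * B)))).mono' ?_ ?_
  · refine ContinuousOn.aestronglyMeasurable ?_ measurableSet_Ioi
    exact (continuous_exp.comp (by fun_prop)).continuousOn.mul
      (continuousOn_id.rpow_const fun t ht => Or.inl (ne_of_gt ht))
  filter_upwards [ae_restrict_mem measurableSet_Ioi] with t (ht : 0 < t)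
  have hexp : A * t - B * t ^ 2 ≤ (A + 1) ^ 2 / (4 * B) + -t := by
    rw [div_add' _ _ _ (by positivity), le_div_iff₀ (by positivity)]
    nlinarith [sq_nonneg (2 * B * t - (A + 1))]
  rw [norm_of_nonneg (by positivity), ← mul_assoc, ← exp_add]
  gcongr

lemma integral_exp_mul_sub_mul_sq_mul_rpow_pos (A : ℝ) {B α : ℝ} (hB : 0 < B) (hα : 0 < α) :
    0 < ∫ t in Ioi (0 : ℝ), exp (A * t - B * t ^ 2) * t ^ (α - 1) := by
  rw [setIntegral_pos_iff_support_of_nonneg_ae _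
    (integrableOn_exp_mul_sub_mul_sq_mul_rpow A hB hα)]
  · rw [inter_eq_right.mpr fun t ht =>
      Function.mem_support.mpr (mul_pos (exp_pos _) (rpow_pos_of_pos (mem_Ioi.mp ht) _)).ne',
      volume_Ioi]
    exact ENNReal.zero_lt_top
  · filter_upwards [ae_restrict_mem measurableSet_Ioi] with t (ht : 0 < t)
    positivity

section CriticalRegime

variable {ν δ : ℝ} {C : ℕ → ℕ}

lemma eventually_one_sub_pow_mul_one_add_pow_le (hν0 : 0 < ν) (hν1 : ν < 1)
    (hd : Tendsto (fun N : ℕ => ((C N : ℝ) - ν * N) / √(N : ℝ)) atTop (𝓝 δ)) :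
    ∀ᶠ N : ℕ in atTop, ∀ t ∈ Ioo 0 √(N : ℝ),
      (1 - t / √(N : ℝ)) ^ (N - C N) * (1 + (1 - ν) / ν * (t / √(N : ℝ))) ^ C N
        ≤ exp ((|δ| + 1) / ν * t - (1 - ν) / 4 * t ^ 2) := by
  filter_upwards [hd.eventually_lt_const (lt_of_le_of_lt (le_abs_self δ) (lt_add_one _)),
    eventually_le_mul_of_tendsto_sub_div_sqrt hd (show ν < (1 + ν) / 2 by linarith),
    eventually_gt_atTop 0] with N hq hr hN t ht
  have hN0 : (0 : ℝ) < N := Nat.cast_pos.mpr hN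
  have hsq : 0 < √(N : ℝ) := sqrt_pos.mpr hN0
  have hCN : C N ≤ N := by
    exact_mod_cast hr.trans (mul_le_of_le_one_left hN0.le (by linarith))
  refine (one_sub_pow_mul_one_add_mul_pow_le (div_pos ht.1 hsq).le ((div_lt_one hsq).mpr ht.2)
    (div_nonneg (by linarith) hν0.le) _ _).trans (exp_le_exp.mpr ?_)
  have hlin := sub_mul_neg_div_sqrt_add_mul_eq (t := t) (a := C N) hν0.ne' hN0
  have hquad := sub_mul_div_sqrt_sq_eq (t := t) (a := C N) hN0
  have hq' : t / ν * (((C N : ℝ) - ν * N) / √(N : ℝ)) ≤ t / ν * (|δ| + 1) :=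
    mul_le_mul_of_nonneg_left hq.le (div_nonneg ht.1.le hν0.le)
  have hr' : t ^ 2 * ((1 - ν) / 2) ≤ t ^ 2 * (1 - C N / N) := by
    gcongr
    rw [le_sub_comm, div_le_iff₀ hN0]
    linarith
  rw [Nat.cast_sub hCN]
  linear_combination hlin - hquad / 2 + hq' + hr' / 2

lemma tendsto_one_sub_pow_mul_one_add_pow (hν0 : 0 < ν) (hν1 : ν < 1)
    (hd : Tendsto (fun N : ℕ => ((C N : ℝ) - ν * N) / √(N : ℝ)) atTop (𝓝 δ)) {t : ℝ}
    (ht : 0 < t) :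
    Tendsto (fun N : ℕ =>
        (1 - t / √(N : ℝ)) ^ (N - C N) * (1 + (1 - ν) / ν * (t / √(N : ℝ))) ^ C N)
      atTop (𝓝 (exp (δ * t / ν - (1 - ν) * t ^ 2 / (2 * ν)))) := by
  refine ((continuous_exp.tendsto _).comp
    (tendsto_sub_mul_log_one_sub_add_mul_log_one_add hν0.ne' ht.ne' hd)).congr' ?_
  filter_upwards [eventually_le_mul_of_tendsto_sub_div_sqrt hd hν1,
    tendsto_natCast_sqrt_atTop.eventually_gt_atTop t] with N hCN hN
  have hsq : 0 < √(N : ℝ) := ht.trans hN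
  rw [one_mul] at hCN
  replace hCN : C N ≤ N := by exact_mod_cast hCN
  have h₁ : 0 < 1 - t / √(N : ℝ) := sub_pos.mpr ((div_lt_one hsq).mpr hN)
  have h₂ : 0 < 1 + (1 - ν) / ν * (t / √(N : ℝ)) := by
    have : 0 ≤ (1 - ν) / ν * (t / √(N : ℝ)) := by
      have := sub_pos.mpr hν1
      positivity
    linarith
  rw [Function.comp_apply, exp_add, ← Nat.cast_sub hCN, exp_nat_mul, exp_nat_mul, exp_log h₁,
    exp_log h₂]

lemma tendsto_setIntegral_Ioi_rescaled (hν0 : 0 < ν) (hν1 : ν < 1) {α : ℝ} (hα : 0 < α)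
    (hd : Tendsto (fun N : ℕ => ((C N : ℝ) - ν * N) / √(N : ℝ)) atTop (𝓝 δ)) :
    Tendsto (fun N : ℕ => ∫ t in Ioi (0 : ℝ), (Ioo 0 √(N : ℝ)).indicator (fun t =>
        (1 - t / √(N : ℝ)) ^ (N - C N) * (1 + (1 - ν) / ν * (t / √(N : ℝ))) ^ C N
          * t ^ (α - 1)) t)
      atTop
      (𝓝 (∫ t in Ioi (0 : ℝ), exp (δ * t / ν - (1 - ν) * t ^ 2 / (2 * ν)) * t ^ (α - 1))) := by
  refine tendsto_integral_filter_of_dominated_convergence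
    (fun t => exp ((|δ| + 1) / ν * t - (1 - ν) / 4 * t ^ 2) * t ^ (α - 1))
    (Eventually.of_forall fun N => ?_) ?_
    (integrableOn_exp_mul_sub_mul_sq_mul_rpow _ (by linarith) hα) ?_
  · exact (by fun_prop : Measurable _).aestronglyMeasurable.indicator measurableSet_Ioo
  · filter_upwards [eventually_one_sub_pow_mul_one_add_pow_le hν0 hν1 hd] with N hN
    filter_upwards [ae_restrict_mem measurableSet_Ioi] with t (ht : 0 < t)
    by_cases hmem : t ∈ Ioo 0 √(N : ℝ)
    · have h₁ : 0 ≤ 1 - t / √(N : ℝ) :=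
        sub_nonneg.mpr ((div_le_one (ht.trans hmem.2)).mpr hmem.2.le)
      have h₂ : 0 ≤ (1 - ν) / ν := div_nonneg (by linarith) hν0.le
      rw [indicator_of_mem hmem, norm_of_nonneg (by positivity)]
      exact mul_le_mul_of_nonneg_right (hN t hmem) (rpow_nonneg ht.le _)
    · rw [indicator_of_notMem hmem, norm_zero]
      positivity
  · filter_upwards [ae_restrict_mem measurableSet_Ioi] with t (ht : 0 < t)
    refine ((tendsto_one_sub_pow_mul_one_add_pow hν0 hν1 hd ht).mul_const _).congr' ?_
    filter_upwards [tendsto_natCast_sqrt_atTop.eventually_gt_atTop t] with N hN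
    rw [indicator_of_mem (show t ∈ Ioo 0 √(N : ℝ) from ⟨ht, hN⟩)]

lemma tendsto_rpow_mul_integral_Ioo_one_sub_pow_mul_one_add_pow (hν0 : 0 < ν) (hν1 : ν < 1)
    {α : ℝ} (hα : 0 < α)
    (hd : Tendsto (fun N : ℕ => ((C N : ℝ) - ν * N) / √(N : ℝ)) atTop (𝓝 δ)) :
    Tendsto (fun N : ℕ => (N : ℝ) ^ (α / 2) * ∫ u in Ioo (0 : ℝ) 1,
        (1 - u) ^ (N - C N) * (1 + (1 - ν) / ν * u) ^ C N * u ^ (α - 1))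
      atTop
      (𝓝 (∫ t in Ioi (0 : ℝ), exp (δ * t / ν - (1 - ν) * t ^ 2 / (2 * ν)) * t ^ (α - 1))) := by
  refine (tendsto_setIntegral_Ioi_rescaled hν0 hν1 hα hd).congr' ?_
  filter_upwards [eventually_gt_atTop 0] with N hN
  rw [show (N : ℝ) ^ (α / 2) = √(N : ℝ) ^ α by
    rw [sqrt_eq_rpow, ← rpow_mul (Nat.cast_nonneg N), one_div_mul_eq_div]]
  exact (rpow_mul_integral_Ioo_zero_one_eq
    (fun u => (1 - u) ^ (N - C N) * (1 + (1 - ν) / ν * u) ^ C N)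
    (sqrt_pos.mpr (Nat.cast_pos.mpr hN)) α).symm

end CriticalRegime

/-- Critical regime (Proposition 10): convergence of the Laplace transform
`E_0(e^{-α[T_{C_N} - (log N)/2]})`, i.e. `N^{α/2}` times the ratio of integrals,
to `Γ(α)/∫₀^∞ exp(δu/ν - (1-ν)u²/(2ν)) u^{α-1} du`. -/
theorem critical_boundary_hitting_laplace_limit
    (ν μ δ α : ℝ) (hν : ν ∈ Set.Ioo (0:ℝ) 1) (hμ : μ = 1 - ν) (hα : 0 < α)
    (C : ℕ → ℕ)
    (hC : (fun N : ℕ => (C N : ℝ) - ν * N - δ * Real.sqrt N)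
        =o[atTop] fun N : ℕ => Real.sqrt N) :
    Tendsto (fun N : ℕ =>
        (N : ℝ) ^ (α / 2) *
          ((∫ u in Set.Ioo (0:ℝ) 1, (1 - u) ^ N * u ^ (α - 1)) /
           (∫ u in Set.Ioo (0:ℝ) 1,
              (1 - u) ^ (N - C N) * (1 + (μ / ν) * u) ^ (C N) * u ^ (α - 1))))
      atTop
      (𝓝 (Real.Gamma α /
        ∫ u in Set.Ioi (0:ℝ),
          Real.exp (δ * u / ν - (1 - ν) * u ^ 2 / (2 * ν)) * u ^ (α - 1))) := by
  obtain ⟨hν0, hν1⟩ := hν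
  subst hμ
  have hd := tendsto_div_of_isLittleO_sub_mul hC
    (tendsto_natCast_sqrt_atTop.eventually_gt_atTop 0 |>.mono fun _ h => h.ne')
  have hI :
      0 < ∫ u in Ioi (0 : ℝ), exp (δ * u / ν - (1 - ν) * u ^ 2 / (2 * ν)) * u ^ (α - 1) := by
    convert integral_exp_mul_sub_mul_sq_mul_rpow_pos (δ / ν) (B := (1 - ν) / (2 * ν))
      (div_pos (by linarith) (by linarith)) hα using 5
    ring
  refine ((tendsto_rpow_mul_integral_Ioo_one_sub_pow_mul_rpow hα).div
    (tendsto_rpow_mul_integral_Ioo_one_sub_pow_mul_one_add_pow hν0 hν1 hα hd) hI.ne').congr' ?_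
  filter_upwards [eventually_gt_atTop 0] with N hN
  have hpos : 0 < (N : ℝ) ^ (α / 2) := rpow_pos_of_pos (Nat.cast_pos.mpr hN) _
  rw [Pi.div_apply, show (N : ℝ) ^ α = (N : ℝ) ^ (α / 2) * (N : ℝ) ^ (α / 2) by
    rw [← rpow_add (Nat.cast_pos.mpr hN), add_halves], mul_assoc, mul_div_mul_left _ _ hpos.ne',
    mul_div_assoc]
end
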